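/- arXiv:1702.02177 — 7 statements merged into one kernel-verified Lean document; each statement's English description precedes it below -/
import Mathlib

section
/- Let f : ℍⁿ → ℍ be holomorphic (where ℍ is the upper half-plane) with f(λ,…,λ) = λ for all λ ∈ ℍ. Then for each j, the function λ ↦ ∂f/∂z_j(λ,…,λ) is constant on ℍ, equal to a nonnegative real number α_j, and ∑_{j=1}^n α_j = 1. -/
/-!
For `z ∈ ℍⁿ` and `|cⱼ| ≤ 1`, let `Cⱼ : ℍ → 𝔻` be the Cayley map sending `zⱼ` to `0` and `C`
the one sending `f z` to `0`. The Schwarz lemma for the self-map `w ↦ C (f (Cⱼ⁻¹ (cⱼ w))ⱼ)` of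
the unit disc gives `|∑ⱼ cⱼ Im zⱼ ∂ⱼf(z)| ≤ Im f(z)`, hence `∑ⱼ Im zⱼ |∂ⱼf(z)| ≤ Im f(z)`. On the diagonal
this reads `∑ⱼ |∂ⱼf(λ,…,λ)| ≤ 1`, while differentiating `f(λ,…,λ) = λ` gives
`∑ⱼ ∂ⱼf(λ,…,λ) = 1`, so every `∂ⱼf(λ,…,λ)` is real and nonnegative. Finally
`λ ↦ ∂ⱼf(λ,…,λ) = (2πi)⁻¹ ∮ f(λ + w eⱼ) / w² dw` is holomorphic, as a circle integral depending
holomorphically on a parameter, and a real-valued holomorphic function on the connected set `ℍ`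
is constant by the open mapping theorem.
-/

open Complex ComplexConjugate Metric Set Filter Topology MeasureTheory

def upperHalfSpace (ι : Type*) : Set (ι → ℂ) := {z | ∀ j, 0 < (z j).im}

theorem isOpen_upperHalfSpace (ι : Type*) [Finite ι] : IsOpen (upperHalfSpace ι) := by
  have : upperHalfSpace ι = univ.pi fun _ => {w : ℂ | 0 < w.im} := by ext; simp [upperHalfSpace]
  rw [this]
  exact isOpen_set_pi finite_univ fun _ _ => isOpen_lt continuous_const continuous_im

theorem const_add_smul_single_mem_upperHalfSpace {ι : Type*} [DecidableEq ι] {μ z : ℂ}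
    (h : ‖z‖ < μ.im) (j : ι) :
    (fun _ => μ) + z • Pi.single j 1 ∈ upperHalfSpace ι := fun k => by
  rcases eq_or_ne k j with rfl | hk
  · simp only [Pi.add_apply, Pi.smul_apply, Pi.single_eq_same, smul_eq_mul, mul_one, add_im]
    linarith [neg_abs_le z.im, abs_im_le_norm z]
  · simpa [hk] using (norm_nonneg z).trans_lt h

-- Möbius maps `ℍ → 𝔻` and `𝔻 → ℍ`, inverse to each other, exchanging `a` and `0`.
noncomputable def cayley (a z : ℂ) : ℂ := (z - a) / (z - conj a)

noncomputable def cayleySymm (a w : ℂ) : ℂ := (a - w * conj a) / (1 - w)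

section Cayley

variable {a : ℂ}

theorem sub_conj_ne_zero_of_im_pos (ha : 0 < a.im) {z : ℂ} (hz : 0 < z.im) : z - conj a ≠ 0 := by
  intro h
  have := congrArg im h
  simp only [sub_im, conj_im, sub_neg_eq_add, zero_im] at this
  linarith

theorem norm_cayley_lt_one (ha : 0 < a.im) {z : ℂ} (hz : 0 < z.im) : ‖cayley a z‖ < 1 := by
  rw [cayley, norm_div, div_lt_one (norm_pos_iff.2 (sub_conj_ne_zero_of_im_pos ha hz)),
    ← sq_lt_sq₀ (norm_nonneg _) (norm_nonneg _), Complex.sq_norm, Complex.sq_norm]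
  simp only [normSq_apply, sub_re, sub_im, conj_re, conj_im]
  nlinarith

theorem cayley_self (a : ℂ) : cayley a a = 0 := by simp [cayley]

theorem hasDerivAt_cayley (ha : 0 < a.im) : HasDerivAt (cayley a) (a - conj a)⁻¹ a := by
  have hne := sub_conj_ne_zero_of_im_pos ha ha
  refine (((hasDerivAt_id' a).sub_const a).div ((hasDerivAt_id' a).sub_const (conj a))
    hne).congr_deriv ?_
  field_simp
  ring

theorem differentiableAt_cayley (ha : 0 < a.im) {z : ℂ} (hz : 0 < z.im) :
    DifferentiableAt ℂ (cayley a) z :=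
  (differentiableAt_id.sub_const a).div (differentiableAt_id.sub_const _)
    (sub_conj_ne_zero_of_im_pos ha hz)

theorem im_cayleySymm_pos (ha : 0 < a.im) {w : ℂ} (hw : ‖w‖ < 1) : 0 < (cayleySymm a w).im := by
  have hw1 : 1 - w ≠ 0 := sub_ne_zero.2 fun h => by simp [← h] at hw
  have him : (cayleySymm a w).im = a.im * (1 - normSq w) / normSq (1 - w) := by
    simp only [cayleySymm, div_im, normSq_apply, sub_im, mul_im, conj_im, conj_re, sub_re, one_re,
      one_im, mul_re]
    ring
  rw [him]
  have : normSq w < 1 := by rw [← Complex.sq_norm]; nlinarith [norm_nonneg w]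
  exact div_pos (mul_pos ha (by linarith)) (normSq_pos.2 hw1)

theorem cayleySymm_zero (a : ℂ) : cayleySymm a 0 = a := by simp [cayleySymm]

theorem hasDerivAt_cayleySymm_zero (a : ℂ) : HasDerivAt (cayleySymm a) (a - conj a) 0 := by
  refine ((((hasDerivAt_id' (0 : ℂ)).mul_const (conj a)).const_sub a).div
    ((hasDerivAt_id' (0 : ℂ)).const_sub 1) (by norm_num)).congr_deriv ?_
  simp only [one_mul, sub_zero, mul_one, zero_mul, mul_neg, sub_neg_eq_add, one_pow, div_one]
  ring

theorem hasDerivAt_cayleySymm_const_mul_zero (a c : ℂ) :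
    HasDerivAt (fun w => cayleySymm a (c * w)) ((a - conj a) * c) 0 := by
  have h := (hasDerivAt_cayleySymm_zero a).comp_of_eq 0 ((hasDerivAt_id' 0).const_mul c)
    (mul_zero c).symm
  rwa [mul_one] at h

theorem differentiableAt_cayleySymm (a : ℂ) {w : ℂ} (hw : ‖w‖ < 1) :
    DifferentiableAt ℂ (cayleySymm a) w :=
  ((differentiableAt_id.mul_const _).const_sub a).div (differentiableAt_id.const_sub 1)
    (sub_ne_zero.2 fun h => by simp [← h] at hw)

end Cayley

theorem ContinuousLinearMap.apply_eq_sum_smul_apply_single {𝕜 M ι : Type*} [Semiring 𝕜]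
    [TopologicalSpace 𝕜] [AddCommMonoid M] [TopologicalSpace M] [Module 𝕜 M] [Fintype ι]
    [DecidableEq ι] (L : (ι → 𝕜) →L[𝕜] M) (v : ι → 𝕜) :
    L v = ∑ j, v j • L (Pi.single j 1) := by
  conv_lhs => rw [← Finset.univ_sum_single v]
  simp only [map_sum, ← map_smul, ← Pi.single_smul, smul_eq_mul, mul_one]

theorem norm_sum_mul_im_mul_fderiv_apply_single_le_im {ι : Type*} [Fintype ι] [DecidableEq ι]
    {f : (ι → ℂ) → ℂ} (hf : DifferentiableOn ℂ f (upperHalfSpace ι))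
    (hmaps : MapsTo f (upperHalfSpace ι) {w | 0 < w.im}) {z : ι → ℂ}
    (hz : z ∈ upperHalfSpace ι) {c : ι → ℂ} (hc : ∀ j, ‖c j‖ ≤ 1) :
    ‖∑ j, c j * (z j).im * fderiv ℂ f z (Pi.single j 1)‖ ≤ (f z).im := by
  have hcw : ∀ w ∈ ball (0 : ℂ) 1, ∀ j, ‖c j * w‖ < 1 := fun w hw j => by
    rw [norm_mul]
    exact (mul_le_of_le_one_left (norm_nonneg w) (hc j)).trans_lt (mem_ball_zero_iff.1 hw)
  set γ : ℂ → ι → ℂ := fun w j => cayleySymm (z j) (c j * w)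
  have hγ : ∀ w ∈ ball (0 : ℂ) 1, γ w ∈ upperHalfSpace ι := fun w hw j =>
    im_cayleySymm_pos (hz j) (hcw w hw j)
  have hγ0 : γ 0 = z := funext fun j => by simp [γ, cayleySymm_zero]
  have hγ' : HasDerivAt γ (fun j => (z j - conj (z j)) * c j) 0 :=
    hasDerivAt_pi.2 fun j => hasDerivAt_cayleySymm_const_mul_zero (z j) (c j)
  have hfz : 0 < (f z).im := hmaps hz
  set G : ℂ → ℂ := fun w => cayley (f z) (f (γ w))
  have hGd : DifferentiableOn ℂ G (ball 0 1) := fun w hw => by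
    have hγd : DifferentiableAt ℂ γ w := differentiableAt_pi.2 fun j =>
      (differentiableAt_cayleySymm _ (hcw w hw j)).comp w (differentiableAt_id.const_mul _)
    have hfd := hf.differentiableAt ((isOpen_upperHalfSpace ι).mem_nhds (hγ w hw))
    exact ((differentiableAt_cayley hfz (hmaps (hγ w hw))).comp w
      (hfd.comp w hγd)).differentiableWithinAt
  have hGmaps : MapsTo G (ball 0 1) (closedBall (G 0) 1) := fun w hw => by
    simp only [G, hγ0, cayley_self, mem_closedBall_zero_iff]
    exact (norm_cayley_lt_one hfz (hmaps (hγ w hw))).le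
  have hG' : HasDerivAt G
      ((f z - conj (f z))⁻¹ * fderiv ℂ f z (fun j => (z j - conj (z j)) * c j)) 0 := by
    have hfd := hf.differentiableAt ((isOpen_upperHalfSpace ι).mem_nhds hz)
    rw [← hγ0] at hfd hfz
    have h := (hasDerivAt_cayley hfz).comp 0 (hfd.hasFDerivAt.comp_hasDerivAt 0 hγ')
    rwa [hγ0] at h
  set S := ∑ j, c j * (z j).im * fderiv ℂ f z (Pi.single j 1)
  have hS : fderiv ℂ f z (fun j => (z j - conj (z j)) * c j) = 2 * I * S := by
    rw [ContinuousLinearMap.apply_eq_sum_smul_apply_single, Finset.mul_sum]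
    refine Finset.sum_congr rfl fun j _ => ?_
    rw [sub_conj, smul_eq_mul]
    push_cast
    ring
  have hschwarz := Complex.norm_deriv_le_div_of_mapsTo_ball hGd hGmaps one_pos
  rw [hG'.deriv, hS, sub_conj, show ((2 * (f z).im : ℝ) * I)⁻¹ * (2 * I * S) = S / (f z).im by
    push_cast; field_simp] at hschwarz
  rwa [norm_div, norm_real, Real.norm_eq_abs, abs_of_pos hfz, div_one, div_le_one hfz] at hschwarz

theorem sum_im_mul_norm_fderiv_apply_single_le_im {ι : Type*} [Fintype ι] [DecidableEq ι]
    {f : (ι → ℂ) → ℂ} (hf : DifferentiableOn ℂ f (upperHalfSpace ι))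
    (hmaps : MapsTo f (upperHalfSpace ι) {w | 0 < w.im}) {z : ι → ℂ}
    (hz : z ∈ upperHalfSpace ι) :
    ∑ j, (z j).im * ‖fderiv ℂ f z (Pi.single j 1)‖ ≤ (f z).im := by
  set g : ι → ℂ := fun j => fderiv ℂ f z (Pi.single j 1)
  have hbound := norm_sum_mul_im_mul_fderiv_apply_single_le_im hf hmaps hz
    (c := fun j => conj (g j) / ‖g j‖) fun j => by simp [div_self_le_one]
  -- This also holds when `g j = 0`, because `0 / 0 = 0`.
  have hterm : ∀ j, conj (g j) / ‖g j‖ * (z j).im * g j = ((z j).im * ‖g j‖ : ℝ) := fun j => by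
    rcases eq_or_ne (g j) 0 with h | h
    · simp [h]
    · have h' : (‖g j‖ : ℂ) ≠ 0 := by simpa using h
      rw [mul_right_comm, div_mul_eq_mul_div, mul_comm (conj _), mul_conj, normSq_eq_norm_sq]
      field_simp
      push_cast
      ring
  rw [Finset.sum_congr rfl fun j _ => hterm j, ← ofReal_sum, norm_real, Real.norm_eq_abs] at hbound
  exact (le_abs_self _).trans hbound

theorem aestronglyMeasurable_deriv_param {α E : Type*} [MeasurableSpace α] [NormedAddCommGroup E]
    [NormedSpace ℂ E] {ν : Measure α} {G : ℂ → α → E} {μ₀ : ℂ} {r : ℝ} (hr : 0 < r)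
    (hG : ∀ μ ∈ ball μ₀ r, AEStronglyMeasurable (G μ) ν)
    (hderiv : ∀ a, DifferentiableAt ℂ (G · a) μ₀) :
    AEStronglyMeasurable (fun a => deriv (G · a) μ₀) ν := by
  -- The derivative is the pointwise limit of the difference quotients along `v n → μ₀`.
  set v : ℕ → ℂ := fun n => μ₀ + ((r / (n + 2) : ℝ) : ℂ)
  have hv_pos : ∀ n : ℕ, 0 < r / (n + 2) := fun n => by positivity
  have hv_mem : ∀ n, v n ∈ ball μ₀ r := fun n => by
    rw [mem_ball, dist_eq_norm]
    simp only [v, add_sub_cancel_left, norm_real, Real.norm_eq_abs, abs_of_pos (hv_pos n)]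
    exact div_lt_self hr (by linarith [n.cast_nonneg (α := ℝ)])
  have hv : Tendsto v atTop (𝓝[≠] μ₀) := by
    refine tendsto_nhdsWithin_iff.2 ⟨?_, Eventually.of_forall fun n => ?_⟩
    · have h : Tendsto (fun n : ℕ => r / ((n : ℝ) + 2)) atTop (𝓝 0) :=
        (tendsto_const_div_atTop_nhds_zero_nat r).comp (tendsto_add_atTop_nat 2) |>.congr
          fun n => by simp
      have h' := (tendsto_const_nhds (x := μ₀)).add ((continuous_ofReal.tendsto 0).comp h)
      rwa [ofReal_zero, add_zero] at h'
    · rw [mem_compl_singleton_iff, Ne, add_eq_left, ofReal_eq_zero]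
      exact (hv_pos n).ne'
  refine aestronglyMeasurable_of_tendsto_ae atTop
    (f := fun n a => slope (G · a) μ₀ (v n)) (fun n => ?_) (ae_of_all _ fun a => ?_)
  · simp only [slope_def_module]
    exact ((hG _ (hv_mem n)).sub (hG _ (mem_ball_self hr))).const_smul _
  · exact (hderiv a).hasDerivAt.tendsto_slope.comp hv

theorem differentiableAt_circleIntegral_param {E : Type*} [NormedAddCommGroup E]
    [NormedSpace ℂ E] [CompleteSpace E] {F : ℂ → ℂ → E} {μ₀ c : ℂ} {r R : ℝ} (hr : 0 < r)
    (hcont : ContinuousOn (Function.uncurry F) (closedBall μ₀ r ×ˢ sphere c |R|))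
    (hdiff : ∀ z ∈ sphere c |R|, DifferentiableOn ℂ (F · z) (ball μ₀ r)) :
    DifferentiableAt ℂ (fun μ => ∮ z in C(c, R), F μ z) μ₀ := by
  obtain ⟨M, hM⟩ :=
    ((isCompact_closedBall μ₀ r).prod (isCompact_sphere c |R|)).exists_bound_of_continuousOn hcont
  have hF : ∀ μ ∈ closedBall μ₀ r, ∀ z ∈ sphere c |R|, ‖F μ z‖ ≤ M :=
    fun μ hμ z hz => hM (μ, z) ⟨hμ, hz⟩
  have hcirc : ∀ μ ∈ closedBall μ₀ r, Continuous fun θ => F μ (circleMap c R θ) := fun μ hμ =>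
    hcont.comp_continuous (continuous_const.prodMk (continuous_circleMap c R))
      fun θ => ⟨hμ, circleMap_mem_sphere' c R θ⟩
  have hderiv : ∀ μ ∈ ball μ₀ r, ∀ z ∈ sphere c |R|, HasDerivAt (F · z) (deriv (F · z) μ) μ :=
    fun μ hμ z hz => ((hdiff z hz).differentiableAt (isOpen_ball.mem_nhds hμ)).hasDerivAt
  have hderiv_le : ∀ μ ∈ ball μ₀ (r / 2), ∀ z ∈ sphere c |R|, ‖deriv (F · z) μ‖ ≤ 2 * M / r := by
    intro μ hμ z hz
    have hsub : closedBall μ (r / 2) ⊆ ball μ₀ r :=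
      closedBall_subset_ball' (by rw [mem_ball] at hμ; linarith)
    calc _ ≤ M / (r / 2) := norm_deriv_le_of_forall_mem_sphere_norm_le (half_pos hr)
          ((hdiff z hz).diffContOnCl_ball hsub) fun ν hν =>
            hF ν (ball_subset_closedBall (hsub (sphere_subset_closedBall hν))) z hz
      _ = 2 * M / r := by field_simp
  have hdc : Continuous (deriv (circleMap c R)) := by
    rw [funext (deriv_circleMap c R)]
    exact (continuous_circleMap 0 R).mul continuous_const
  refine (intervalIntegral.hasDerivAt_integral_of_dominated_loc_of_deriv_le
    (F' := fun μ θ => deriv (circleMap c R) θ • deriv (F · (circleMap c R θ)) μ)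
    (bound := fun _ => |R| * (2 * M / r)) (ball_mem_nhds μ₀ (half_pos hr))
    ?_ ?_ ?_ ?_ intervalIntegrable_const ?_).2.differentiableAt
  · filter_upwards [ball_mem_nhds μ₀ hr] with μ hμ
    exact (hdc.smul (hcirc μ (ball_subset_closedBall hμ))).aestronglyMeasurable
  · exact (hdc.smul (hcirc μ₀ (mem_closedBall_self hr.le))).intervalIntegrable _ _
  · exact hdc.aestronglyMeasurable.smul (aestronglyMeasurable_deriv_param hr
      (fun μ hμ => (hcirc μ (ball_subset_closedBall hμ)).aestronglyMeasurable)
      (fun θ => (hderiv μ₀ (mem_ball_self hr) _ (circleMap_mem_sphere' c R θ)).differentiableAt))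
  · refine ae_of_all _ fun θ _ μ hμ => ?_
    rw [norm_smul, deriv_circleMap, norm_mul, norm_I, mul_one, norm_circleMap_zero]
    exact mul_le_mul_of_nonneg_left (hderiv_le μ hμ _ (circleMap_mem_sphere' c R θ)) (abs_nonneg R)
  · refine ae_of_all _ fun θ _ μ hμ => ?_
    exact (hderiv μ (ball_subset_ball (half_le_self hr.le) hμ) _
      (circleMap_mem_sphere' c R θ)).const_smul _

theorem differentiableAt_deriv_param {E : Type*} [NormedAddCommGroup E] [NormedSpace ℂ E]
    [CompleteSpace E] {G : ℂ → ℂ → E} {μ₀ c : ℂ} {r R : ℝ} (hr : 0 < r) (hR : 0 < R)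
    (hcont : ContinuousOn (Function.uncurry G) (closedBall μ₀ r ×ˢ sphere c R))
    (hμ : ∀ z ∈ sphere c R, DifferentiableOn ℂ (G · z) (ball μ₀ r))
    (hz : ∀ μ ∈ ball μ₀ r, DifferentiableOn ℂ (G μ) (closedBall c R)) :
    DifferentiableAt ℂ (fun μ => deriv (G μ) c) μ₀ := by
  have hcauchy : (fun μ => deriv (G μ) c) =ᶠ[𝓝 μ₀]
      fun μ => (2 * Real.pi * I)⁻¹ • ∮ z in C(c, R), (1 / (z - c) ^ 2) • G μ z := by
    filter_upwards [ball_mem_nhds μ₀ hr] with μ hμ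
    rw [(hz μ hμ).deriv_eq_smul_circleIntegral hR, smul_smul, inv_mul_cancel₀ two_pi_I_ne_zero,
      one_smul]
  refine (DifferentiableAt.const_smul ?_ _).congr_of_eventuallyEq hcauchy
  rw [← abs_of_pos hR] at hcont hμ
  refine differentiableAt_circleIntegral_param hr ?_ fun z hz => (hμ z hz).const_smul _
  refine ContinuousOn.smul ?_ hcont
  refine continuousOn_const.div (by fun_prop) fun p hp => pow_ne_zero _ (sub_ne_zero.2 ?_)
  exact ne_of_mem_sphere hp.2 (abs_pos_of_pos hR).ne'

theorem differentiableAt_fderiv_const_apply_single {ι : Type*} [Fintype ι] [DecidableEq ι]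
    {f : (ι → ℂ) → ℂ} (hf : DifferentiableOn ℂ f (upperHalfSpace ι)) {μ₀ : ℂ}
    (hμ₀ : 0 < μ₀.im) (j : ι) :
    DifferentiableAt ℂ (fun μ => fderiv ℂ f (fun _ => μ) (Pi.single j 1)) μ₀ := by
  set p : ℂ → ℂ → ι → ℂ := fun μ z => (fun _ => μ) + z • Pi.single j 1
  have hp : Continuous (Function.uncurry p) := by fun_prop
  have hmem : ∀ μ ∈ closedBall μ₀ (μ₀.im / 4), ∀ z ∈ closedBall (0 : ℂ) (μ₀.im / 2),
      p μ z ∈ upperHalfSpace ι := fun μ hμ z hz => by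
    refine const_add_smul_single_mem_upperHalfSpace ?_ j
    rw [mem_closedBall, dist_eq_norm] at hμ
    rw [mem_closedBall_zero_iff] at hz
    have := abs_im_le_norm (μ - μ₀)
    rw [sub_im] at this
    linarith [neg_abs_le (μ.im - μ₀.im)]
  have hfd : ∀ μ z, p μ z ∈ upperHalfSpace ι → DifferentiableAt ℂ f (p μ z) := fun μ z h =>
    hf.differentiableAt ((isOpen_upperHalfSpace ι).mem_nhds h)
  have hslice : ∀ μ z, p μ z ∈ upperHalfSpace ι →
      HasDerivAt (fun w => f (p μ w)) (fderiv ℂ f (p μ z) (Pi.single j 1)) z := fun μ z h => by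
    have hpz : HasDerivAt (p μ) (Pi.single j 1) z := by
      have h := ((hasDerivAt_id' z).smul_const (Pi.single j 1 : ι → ℂ)).const_add (fun _ => μ)
      rwa [one_smul] at h
    exact (hfd μ z h).hasFDerivAt.comp_hasDerivAt z hpz
  have hquarter : 0 < μ₀.im / 4 := by positivity
  refine (differentiableAt_deriv_param (G := fun μ z => f (p μ z)) (c := 0) (R := μ₀.im / 2)
    hquarter (by positivity) ?_ (fun z hz => ?_) (fun μ hμ => ?_)).congr_of_eventuallyEq ?_
  · exact hf.continuousOn.comp hp.continuousOn
      fun q hq => hmem q.1 hq.1 q.2 (sphere_subset_closedBall hq.2)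
  · refine fun μ hμ => (DifferentiableAt.comp μ (hfd μ z ?_) ?_).differentiableWithinAt
    · exact hmem μ (ball_subset_closedBall hμ) z (sphere_subset_closedBall hz)
    · fun_prop
  · exact fun z hz =>
      (hslice μ z (hmem μ (ball_subset_closedBall hμ) z hz)).differentiableAt.differentiableWithinAt
  · filter_upwards [ball_mem_nhds μ₀ hquarter] with μ hμ
    have h0 := hmem μ (ball_subset_closedBall hμ) 0 (mem_closedBall_self (by positivity))
    have hp0 : p μ 0 = fun _ => μ := by simp [p]
    rw [(hslice μ 0 h0).deriv, hp0]

theorem sum_fderiv_const_apply_single_eq_one {ι : Type*} [Fintype ι] [DecidableEq ι]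
    {f : (ι → ℂ) → ℂ} {l : ℂ} (hf : DifferentiableAt ℂ f (fun _ => l))
    (hdiag : ∀ᶠ μ in 𝓝 l, f (fun _ => μ) = μ) :
    ∑ j, fderiv ℂ f (fun _ => l) (Pi.single j 1) = 1 := by
  have hchain : HasDerivAt (fun μ : ℂ => f (fun _ => μ)) (fderiv ℂ f (fun _ => l) fun _ => 1) l :=
    hf.hasFDerivAt.comp_hasDerivAt l (hasDerivAt_pi.2 fun _ => hasDerivAt_id' l)
  have hone : ∑ j, (Pi.single j 1 : ι → ℂ) = fun _ => 1 := Finset.univ_sum_single fun _ => 1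
  rw [← map_sum, hone, ← hchain.deriv]
  exact (Filter.EventuallyEq.deriv_eq (f := id) hdiag).trans (deriv_id l)

theorem eq_ofReal_norm_of_sum_eq_one {ι : Type*} [Fintype ι] {g : ι → ℂ}
    (hsum : ∑ j, g j = 1) (hnorm : ∑ j, ‖g j‖ ≤ 1) (j : ι) : g j = ‖g j‖ := by
  have hre : ∑ j, (g j).re = 1 := by simpa [re_sum] using congrArg re hsum
  have hzero : ∀ i ∈ Finset.univ, ‖g i‖ - (g i).re = 0 := by
    refine (Finset.sum_eq_zero_iff_of_nonneg fun i _ => sub_nonneg.2 (re_le_norm _)).1 ?_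
    rw [Finset.sum_sub_distrib, hre]
    linarith [Finset.sum_le_sum fun i (_ : i ∈ Finset.univ) => re_le_norm (g i)]
  have hj : ‖g j‖ = (g j).re := sub_eq_zero.1 (hzero j (Finset.mem_univ j))
  have him : (g j).im = 0 := abs_re_eq_norm.1 (by rw [hj, abs_of_nonneg (hj ▸ norm_nonneg _)])
  exact ext (by simp [hj]) (by simp [him])

theorem AnalyticOnNhd.exists_eq_of_forall_im_eq_zero {E : Type*} [NormedAddCommGroup E]
    [NormedSpace ℂ E] {g : E → ℂ} {U : Set E} (hg : AnalyticOnNhd ℂ g U) (hU : IsPreconnected U)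
    (hUo : IsOpen U) (him : ∀ z ∈ U, (g z).im = 0) : ∃ w, ∀ z ∈ U, g z = w := by
  rcases U.eq_empty_or_nonempty with rfl | ⟨z₀, hz₀⟩
  · exact ⟨0, by simp⟩
  refine (hg.is_constant_or_isOpen hU).resolve_right fun hopen => ?_
  have hsub : g '' U ⊆ im ⁻¹' {0} := by
    rintro _ ⟨z, hz, rfl⟩
    exact him z hz
  have hint := interior_maximal hsub (hopen U subset_rfl hUo)
  rw [interior_preimage_im, interior_singleton] at hint
  exact hint ⟨z₀, hz₀, rfl⟩

theorem fderiv_const_apply_single_eq_ofReal_norm {ι : Type*} [Fintype ι] [DecidableEq ι]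
    {f : (ι → ℂ) → ℂ} (hf : DifferentiableOn ℂ f (upperHalfSpace ι))
    (hmaps : MapsTo f (upperHalfSpace ι) {w | 0 < w.im}) {l : ℂ} (hl : 0 < l.im)
    (hdiag : ∀ᶠ μ in 𝓝 l, f (fun _ => μ) = μ) (j : ι) :
    fderiv ℂ f (fun _ => l) (Pi.single j 1) = ‖fderiv ℂ f (fun _ => l) (Pi.single j 1)‖ := by
  have hmem : (fun _ => l) ∈ upperHalfSpace ι := fun _ => hl
  refine eq_ofReal_norm_of_sum_eq_one (sum_fderiv_const_apply_single_eq_one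
    (hf.differentiableAt ((isOpen_upperHalfSpace ι).mem_nhds hmem)) hdiag) ?_ j
  have hschwarz := sum_im_mul_norm_fderiv_apply_single_le_im hf hmaps hmem
  rw [← Finset.mul_sum, hdiag.self_of_nhds] at hschwarz
  exact le_of_mul_le_mul_left (by rwa [mul_one]) hl

/-- Let `f : ℍⁿ → ℍ` be holomorphic with `f(λ,…,λ) = λ` for all `λ ∈ ℍ`.
Then for each `j`, the function `λ ↦ ∂f/∂z_j(λ,…,λ)` is constant on `ℍ`, equal to a
nonnegative real number `α j`, and `∑ j, α j = 1`. -/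
theorem diagonal_partials_constant {n : ℕ} (f : (Fin n → ℂ) → ℂ)
    (hf : DifferentiableOn ℂ f {z : Fin n → ℂ | ∀ j, 0 < (z j).im})
    (hmaps : ∀ z : Fin n → ℂ, (∀ j, 0 < (z j).im) → 0 < (f z).im)
    (hdiag : ∀ l : ℂ, 0 < l.im → f (fun _ => l) = l) :
    ∃ α : Fin n → ℝ, (∀ j, 0 ≤ α j) ∧ (∑ j, α j = 1) ∧
      ∀ l : ℂ, 0 < l.im → ∀ j, fderiv ℂ f (fun _ => l) (Pi.single j 1) = (α j : ℂ) := by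
  set H : Set ℂ := {l | 0 < l.im}
  have hH : IsOpen H := isOpen_lt continuous_const continuous_im
  set a : Fin n → ℂ → ℂ := fun j l => fderiv ℂ f (fun _ => l) (Pi.single j 1)
  have hdiagH : ∀ l ∈ H, ∀ᶠ μ in 𝓝 l, f (fun _ => μ) = μ := fun l hl =>
    eventually_of_mem (hH.mem_nhds hl) hdiag
  have hreal : ∀ l ∈ H, ∀ j, a j l = ‖a j l‖ := fun l hl =>
    fderiv_const_apply_single_eq_ofReal_norm hf (fun z hz => hmaps z hz) hl (hdiagH l hl)
  have hconst : ∀ j, ∃ w, ∀ l ∈ H, a j l = w := fun j =>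
    (DifferentiableOn.analyticOnNhd (fun l hl =>
      (differentiableAt_fderiv_const_apply_single hf hl j).differentiableWithinAt) hH)
      |>.exists_eq_of_forall_im_eq_zero (convex_halfSpace_im_gt 0).isPreconnected hH
      fun l hl => (congrArg im (hreal l hl j)).trans (ofReal_im _)
  choose w hw using hconst
  have hI : I ∈ H := by simp [H]
  refine ⟨fun j => ‖a j I‖, fun j => norm_nonneg _, ?_, fun l hl j => ?_⟩
  · have hsum := sum_fderiv_const_apply_single_eq_one
      (hf.differentiableAt ((isOpen_upperHalfSpace _).mem_nhds fun _ => hI)) (hdiagH I hI)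
    rw [Finset.sum_congr rfl fun j _ => hreal I hI j] at hsum
    exact_mod_cast hsum
  · exact (hw j l hl).trans ((hw j I hI).symm.trans (hreal I hI j))
end

section
/- Let φ : ℂ → ℝ be harmonic with φ(0) = 0, ∂φ/∂x(0) = 0, ∂φ/∂y(0) = 0, and suppose there is C > 0 with φ(z) ≥ −C|z| for all z ∈ ℂ. Then φ is identically zero. -/
/-!
Write `φ = Re F` with `F` entire and put `G = F 0 - F`, so that `G 0 = 0`, `Re G = -φ ≤ C ‖z‖`,
and `G' 0 = 0` by the conditions on the partial derivatives. Borel–Carathéodory on the disc of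
radius `2 ‖z‖` turns the one-sided bound into `‖G z‖ ≤ 4 C ‖z‖`, so `G z / z` is a bounded entire
function, hence constant, equal to `G' 0 = 0`.
-/

open Complex Metric Set InnerProductSpace Laplacian

theorem laplacian_complexPlane_eq_fderiv_fderiv {F : Type*} [NormedAddCommGroup F]
    [NormedSpace ℝ F] {f : ℂ → F} {x : ℂ} (hf : ContDiffAt ℝ 2 f x) :
    Δ f x = fderiv ℝ (fun w => fderiv ℝ f w 1) x 1 + fderiv ℝ (fun w => fderiv ℝ f w I) x I := by
  have hf' : DifferentiableAt ℝ (fderiv ℝ f) x :=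
    (hf.fderiv_right le_rfl).differentiableAt one_ne_zero
  simp [laplacian_eq_iteratedFDeriv_complexPlane, iteratedFDeriv_two_apply,
    fderiv_clm_apply hf' (differentiableAt_const _)]

theorem HasDerivAt.fderiv_re_apply {F : ℂ → ℂ} {F' z : ℂ} (hF : HasDerivAt F F' z) (v : ℂ) :
    fderiv ℝ (fun w => (F w).re) z v = (F' * v).re := by
  have h := reCLM.hasFDerivAt.comp z (hF.hasFDerivAt.restrictScalars ℝ)
  rw [show (fun w => (F w).re) = reCLM ∘ F from rfl, h.fderiv]
  simp [mul_comm]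

theorem Differentiable.norm_le_of_re_le_mul_norm {G : ℂ → ℂ} (hG : Differentiable ℂ G)
    (hG₀ : G 0 = 0) {C : ℝ} (hC : 0 < C) (hre : ∀ z, (G z).re ≤ C * ‖z‖) (z : ℂ) :
    ‖G z‖ ≤ 4 * C * ‖z‖ := by
  rcases eq_or_ne z 0 with rfl | hz
  · simp [hG₀]
  have hz' : 0 < ‖z‖ := norm_pos_iff.2 hz
  have hmaps : MapsTo G (ball 0 (2 * ‖z‖)) {w | w.re ≤ C * (2 * ‖z‖)} := fun w hw =>
    (hre w).trans (mul_le_mul_of_nonneg_left (mem_ball_zero_iff.1 hw).le hC.le)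
  calc ‖G z‖ ≤ 2 * (C * (2 * ‖z‖)) * ‖z‖ / (2 * ‖z‖ - ‖z‖) :=
        borelCaratheodory_zero (by positivity) hG.differentiableOn hmaps (by positivity)
          (mem_ball_zero_iff.2 (by linarith)) hG₀
    _ = 4 * C * ‖z‖ := by field_simp; ring

theorem Complex.eq_deriv_mul_of_norm_le_mul_norm {G : ℂ → ℂ}
    (hG : Differentiable ℂ G) (hG₀ : G 0 = 0) {K : ℝ} (hK : ∀ z, ‖G z‖ ≤ K * ‖z‖) (z : ℂ) :
    G z = deriv G 0 * z := by
  have hslope : ∀ w, ‖dslope G 0 w‖ ≤ max K ‖deriv G 0‖ := by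
    intro w
    rcases eq_or_ne w 0 with rfl | hw
    · simp
    · rw [dslope_of_ne _ hw, slope_def_field, hG₀, sub_zero, sub_zero, norm_div,
        div_le_iff₀ (norm_pos_iff.2 hw)]
      exact (hK w).trans (by gcongr; exact le_max_left _ _)
  have hdiff : Differentiable ℂ (dslope G 0) :=
    differentiableOn_univ.1 ((differentiableOn_dslope Filter.univ_mem).2 hG.differentiableOn)
  have hconst := hdiff.apply_eq_apply_of_bounded
    (isBounded_iff_forall_norm_le.2 ⟨_, forall_mem_range.2 hslope⟩) z 0
  rw [dslope_same] at hconst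
  simpa [hconst, hG₀, mul_comm] using (sub_smul_dslope G 0 z).symm

/-- Let `φ : ℂ → ℝ` be harmonic with `φ(0) = 0`, `∂φ/∂x(0) = 0`,
`∂φ/∂y(0) = 0`, and suppose there is `C > 0` with `φ(z) ≥ -C|z|` for all `z`.
Then `φ` is identically zero. -/
theorem harmonic_linear_lower_bound_rigidity (φ : ℂ → ℝ)
    (hsmooth : ContDiff ℝ 2 φ)
    (hharm : ∀ z : ℂ,
      fderiv ℝ (fun w => fderiv ℝ φ w 1) z 1
        + fderiv ℝ (fun w => fderiv ℝ φ w Complex.I) z Complex.I = 0)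
    (h0 : φ 0 = 0)
    (hx : fderiv ℝ φ 0 1 = 0)
    (hy : fderiv ℝ φ 0 Complex.I = 0)
    (C : ℝ) (hC : 0 < C)
    (hbound : ∀ z : ℂ, φ z ≥ -C * ‖z‖) :
    ∀ z : ℂ, φ z = 0 := by
  have hφ : HarmonicOnNhd φ univ := fun _ _ =>
    ⟨hsmooth.contDiffAt, Filter.Eventually.of_forall fun z => by
      rw [laplacian_complexPlane_eq_fderiv_fderiv hsmooth.contDiffAt, hharm z]; rfl⟩
  obtain ⟨F, hF, hFre⟩ := hφ.exists_analyticOnNhd_univ_re_eq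
  have hFd : Differentiable ℂ F := differentiableOn_univ.1 hF.differentiableOn
  have hF'₀ : deriv F 0 = 0 := by
    have h1 := (hFd 0).hasDerivAt.fderiv_re_apply 1
    have hI := (hFd 0).hasDerivAt.fderiv_re_apply I
    rw [hFre] at h1 hI
    apply Complex.ext <;> simp_all
  set G := fun z => F 0 - F z
  have hG : Differentiable ℂ G := (differentiable_const _).sub hFd
  have hG₀ : G 0 = 0 := sub_self _
  have hGre : ∀ z, (G z).re = -φ z := fun z => by
    simp only [G, sub_re, congrFun hFre, h0, zero_sub]
  have hGre_le : ∀ z, (G z).re ≤ C * ‖z‖ := fun z => by linarith [hGre z, hbound z]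
  have hG'₀ : deriv G 0 = 0 := by simp [G, hF'₀]
  intro z
  have hGz := eq_deriv_mul_of_norm_le_mul_norm hG hG₀
    (hG.norm_le_of_re_le_mul_norm hG₀ hC hGre_le) z
  rw [hG'₀, zero_mul] at hGz
  simpa [hGz] using hGre z
end

section
/- Let α_1,…,α_n be positive reals with ∑ α_j = 1. Let f : ℍⁿ → ℍ be holomorphic with (A) f(λ,…,λ) = λ for all λ ∈ ℍ, (B) ∂f/∂z_j(λ,…,λ) = α_j for all λ ∈ ℍ and all j, and (C) f(z_1+t,…,z_n+t) = f(z_1,…,z_n) + t for all z ∈ ℍⁿ and all real t. Then f(z_1,…,z_n) = ∑_{j=1}^n α_j z_j. -/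
/-!
The real translations in (C) extend, by the identity theorem, to complex diagonal translations
`f (z + μ𝟏) = f z + μ`; shifting down by `s i` and using `Im f > 0` then gives
`Im f z ≥ minⱼ Im zⱼ`. So `g = f - ∑ αⱼ zⱼ` is invariant under diagonal translations and extends
to an entire function `G` on `ℂⁿ` (first push a point into `ℍⁿ` by an imaginary diagonal
shift), with `Im G w ≥ -2‖w‖`. On each complex line `λ ↦ G (λ z)` such a one-sided linear bound
makes `G` affine (Borel–Carathéodory, then Cauchy's estimate and Liouville for the derivative),
and (A), (B) say that its value and slope at `0` vanish.
-/

open Complex Set Metric Filter Topology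

/-- Borel–Carathéodory for `I * f` on the ball of radius `2‖w‖ + 1`. -/
theorem norm_le_of_neg_le_im {f : ℂ → ℂ} (hf : Differentiable ℂ f) {B : ℝ} (hB : 0 < B)
    (him : ∀ w, -(B * (1 + ‖w‖)) ≤ (f w).im) (w : ℂ) :
    ‖f w‖ ≤ (4 * B + 3 * ‖f 0‖) * (1 + ‖w‖) := by
  set r := ‖w‖
  have hr : 0 ≤ r := norm_nonneg w
  have hre : MapsTo (fun v => I * f v) (ball 0 (2 * r + 1)) {v | v.re ≤ B * (2 * r + 2)} := by
    intro v hv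
    have hv' : ‖v‖ < 2 * r + 1 := mem_ball_zero_iff.mp hv
    simp only [mem_ofPred_eq, mul_re, I_re, I_im, zero_mul, one_mul, zero_sub]
    nlinarith [him v]
  have hbc := borelCaratheodory (by positivity) (hf.const_mul I).differentiableOn hre
    (by positivity) (mem_ball_zero_iff.mpr (by linarith))
  simp only [norm_mul, norm_I, one_mul] at hbc
  calc ‖f w‖ ≤ 2 * (B * (2 * r + 2)) * r / (r + 1) + ‖f 0‖ * (3 * r + 1) / (r + 1) := by
        convert hbc using 3 <;> ring
    _ ≤ (4 * B + 3 * ‖f 0‖) * (1 + r) := by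
      rw [← add_div, div_le_iff₀ (by linarith)]
      have hF := norm_nonneg (f 0)
      nlinarith [mul_nonneg hB.le hr, mul_nonneg hF hr, mul_nonneg hF (mul_nonneg hr hr)]

theorem eq_add_deriv_mul_of_norm_le {f : ℂ → ℂ} (hf : Differentiable ℂ f) {C : ℝ}
    (hC : ∀ w, ‖f w‖ ≤ C * (1 + ‖w‖)) (w : ℂ) : f w = f 0 + deriv f 0 * w := by
  have hC0 : 0 ≤ C := by simpa using (norm_nonneg _).trans (hC 0)
  have hderiv_le : ∀ c, ‖deriv f c‖ ≤ 2 * C := fun c => by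
    have hR : 0 < 1 + ‖c‖ := by positivity
    have hsphere : ∀ v ∈ sphere c (1 + ‖c‖), ‖f v‖ ≤ 2 * C * (1 + ‖c‖) := fun v hv => by
      have : ‖v‖ ≤ ‖c‖ + (1 + ‖c‖) := by
        simpa [mem_sphere_iff_norm.mp hv] using norm_le_norm_add_norm_sub' v c
      nlinarith [hC v]
    simpa [hR.ne'] using norm_deriv_le_of_forall_mem_sphere_norm_le hR hf.diffContOnCl hsphere
  have hconst : ∀ c, deriv f c = deriv f 0 := fun c =>
    hf.deriv.apply_eq_apply_of_bounded
      (isBounded_iff_forall_norm_le.mpr ⟨2 * C, forall_mem_range.mpr hderiv_le⟩) c 0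
  have hline : ∀ c, HasDerivAt (fun v => f v - deriv f 0 * v) 0 c := fun c => by
    simpa [hconst c] using (hf c).hasDerivAt.fun_sub ((hasDerivAt_id c).const_mul (deriv f 0))
  have := is_const_of_deriv_eq_zero (fun c => (hline c).differentiableAt)
    (fun c => (hline c).deriv) w 0
  simp only [mul_zero, sub_zero] at this
  linear_combination this

theorem DifferentiableOn.eqOn_zero_of_forall_ofReal_eq_zero {F : ℂ → ℂ} {U : Set ℂ}
    (hF : DifferentiableOn ℂ F U) (hU : IsOpen U) (hU' : IsPreconnected U) {x₀ : ℝ}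
    (hx₀ : (x₀ : ℂ) ∈ U) (hreal : ∀ t : ℝ, F t = 0) : EqOn F 0 U := by
  have hmaps : Tendsto ((↑) : ℝ → ℂ) (𝓝[≠] x₀) (𝓝[≠] (x₀ : ℂ)) :=
    continuous_ofReal.continuousWithinAt.tendsto_nhdsWithin fun t ht => ofReal_injective.ne ht
  exact (hF.analyticOnNhd hU).eqOn_zero_of_preconnected_of_frequently_eq_zero hU' hx₀
    (hmaps.frequently (Frequently.of_forall hreal))

theorem eq_zero_of_neg_le_im {E : Type*} [NormedAddCommGroup E] [NormedSpace ℂ E] {G : E → ℂ}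
    (hG : Differentiable ℂ G) (hG0 : G 0 = 0) (hDG0 : HasFDerivAt G (0 : E →L[ℂ] ℂ) 0)
    {B : ℝ} (hB : 0 < B) (him : ∀ w, -(B * (1 + ‖w‖)) ≤ (G w).im) (w : E) : G w = 0 := by
  set Φ : ℂ → ℂ := fun l => G (l • w)
  have hΦ : Differentiable ℂ Φ := hG.comp (differentiable_id.smul_const w)
  have hΦ' : HasDerivAt Φ 0 0 := by
    have h := hDG0.comp_hasDerivAt_of_eq (0 : ℂ) ((hasDerivAt_id (0 : ℂ)).smul_const w)
      (zero_smul ℂ w).symm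
    rw [zero_apply] at h
    exact h
  have hΦim : ∀ l : ℂ, -(B * (1 + ‖w‖) * (1 + ‖l‖)) ≤ (Φ l).im := fun l => by
    have := him (l • w)
    rw [norm_smul] at this
    change _ ≤ (G (l • w)).im
    nlinarith [mul_nonneg hB.le (norm_nonneg l), mul_nonneg hB.le (norm_nonneg w)]
  have := eq_add_deriv_mul_of_norm_le hΦ (norm_le_of_neg_le_im hΦ (by positivity) hΦim) 1
  simpa [Φ, hΦ'.deriv, hG0] using this

section UpperHalfPlanePi

variable {ι : Type*}

def upperHalfPlanePi (ι : Type*) : Set (ι → ℂ) := {z | ∀ j, 0 < (z j).im}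

def DiagonalShiftEquivariant (f : (ι → ℂ) → ℂ) : Prop :=
  ∀ w ∈ upperHalfPlanePi ι, ∀ μ : ℂ, (fun j => w j + μ) ∈ upperHalfPlanePi ι →
    f (fun j => w j + μ) = f w + μ

def DiagonalShiftInvariant (g : (ι → ℂ) → ℂ) : Prop :=
  ∀ w ∈ upperHalfPlanePi ι, ∀ μ : ℂ, (fun j => w j + μ) ∈ upperHalfPlanePi ι →
    g (fun j => w j + μ) = g w

theorem convex_setOf_add_mem_upperHalfPlanePi (w : ι → ℂ) :
    Convex ℝ {ν : ℂ | (fun j => w j + ν) ∈ upperHalfPlanePi ι} := by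
  intro x hx y hy a b ha hb hab j
  have hxj := hx j
  have hyj := hy j
  simp only [add_im, smul_im, smul_eq_mul] at hxj hyj ⊢
  have hsplit : (w j).im = a * (w j).im + b * (w j).im := by rw [← add_mul, hab, one_mul]
  rcases ha.eq_or_lt with rfl | ha'
  · obtain rfl : b = 1 := by linarith
    simpa using hyj
  · nlinarith [mul_pos ha' hxj, mul_nonneg hb hyj.le]

theorem DiagonalShiftEquivariant.le_im {f : (ι → ℂ) → ℂ} (hf : DiagonalShiftEquivariant f)
    (hmaps : ∀ z ∈ upperHalfPlanePi ι, 0 < (f z).im) {w : ι → ℂ} (hw : w ∈ upperHalfPlanePi ι)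
    {c : ℝ} (hc : ∀ j, c ≤ (w j).im) : c ≤ (f w).im := by
  refine le_of_forall_lt fun s hs => ?_
  have hmem : (fun j => w j + -(s * I)) ∈ upperHalfPlanePi ι := fun j => by
    simpa using hs.trans_le (hc j)
  have := hmaps _ hmem
  rw [hf w hw _ hmem] at this
  simpa using this

theorem DiagonalShiftEquivariant.sub_clm {f : (ι → ℂ) → ℂ} (hf : DiagonalShiftEquivariant f)
    {L : (ι → ℂ) →L[ℂ] ℂ} (hL : ∀ μ, L (fun _ => μ) = μ) :
    DiagonalShiftInvariant fun v => f v - L v := fun w hw μ hμ => by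
  beta_reduce
  rw [hf w hw μ hμ, show (fun j => w j + μ) = w + fun _ => μ from rfl, map_add, hL]
  ring

variable [Fintype ι]

theorem isOpen_upperHalfPlanePi : IsOpen (upperHalfPlanePi ι) := by
  simp only [upperHalfPlanePi, ofPred_forall]
  exact isOpen_iInter_of_finite fun j =>
    isOpen_lt continuous_const (continuous_im.comp (continuous_apply j))

theorem sub_norm_le_im_add_mul_I (w : ι → ℂ) (T : ℝ) (j : ι) : T - ‖w‖ ≤ (w j + T * I).im := by
  have := (abs_le.mp ((abs_im_le_norm (w j)).trans (norm_le_pi_norm w j))).1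
  simp only [add_im, mul_im, ofReal_re, I_im, ofReal_im, I_re, mul_one, mul_zero, add_zero]
  linarith

theorem add_mul_I_mem_upperHalfPlanePi {w : ι → ℂ} {T : ℝ} (hT : ‖w‖ < T) :
    (fun j => w j + T * I) ∈ upperHalfPlanePi ι := fun j =>
  (sub_pos.mpr hT).trans_le (sub_norm_le_im_add_mul_I w T j)

theorem diagonalShiftEquivariant_of_real {f : (ι → ℂ) → ℂ}
    (hf : DifferentiableOn ℂ f (upperHalfPlanePi ι))
    (hC : ∀ z ∈ upperHalfPlanePi ι, ∀ t : ℝ, f (fun j => z j + t) = f z + t) :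
    DiagonalShiftEquivariant f := fun w hw μ hμ => by
  set U := {ν : ℂ | (fun j => w j + ν) ∈ upperHalfPlanePi ι}
  have hU : IsOpen U :=
    isOpen_upperHalfPlanePi.preimage (continuous_pi fun j => continuous_const.add continuous_id)
  have hF : DifferentiableOn ℂ (fun ν => f (fun j => w j + ν) - f w - ν) U := by
    have hcomp : DifferentiableOn ℂ (fun ν : ℂ => f (fun j => w j + ν)) U :=
      hf.comp (f := fun ν : ℂ => fun j => w j + ν) (by fun_prop) fun ν hν => hν
    exact (hcomp.sub_const _).sub differentiableOn_id
  have h0 : ((0 : ℝ) : ℂ) ∈ U := by simpa [U] using hw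
  have := hF.eqOn_zero_of_forall_ofReal_eq_zero hU
    (convex_setOf_add_mem_upperHalfPlanePi w).isPreconnected h0 (fun t => by simp [hC w hw t]) hμ
  simpa [sub_eq_iff_eq_add'] using this

end UpperHalfPlanePi

section Extension

variable {ι : Type*} [Fintype ι] {g : (ι → ℂ) → ℂ}

noncomputable def extendByDiagonalShift (g : (ι → ℂ) → ℂ) (w : ι → ℂ) : ℂ :=
  g (fun j => w j + (‖w‖ + 1 : ℝ) * I)

theorem extendByDiagonalShift_eq_of_norm_lt (hg : DiagonalShiftInvariant g) {w : ι → ℂ} {T : ℝ}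
    (hT : ‖w‖ < T) : extendByDiagonalShift g w = g (fun j => w j + T * I) := by
  have hshift : (fun j => (w j + (‖w‖ + 1 : ℝ) * I) + (T - (‖w‖ + 1) : ℝ) * I) =
      fun j => w j + T * I := by
    funext j; push_cast; ring
  rw [extendByDiagonalShift, ← hg _ (add_mul_I_mem_upperHalfPlanePi (lt_add_one ‖w‖)) _
    (hshift ▸ add_mul_I_mem_upperHalfPlanePi hT), hshift]

theorem extendByDiagonalShift_eq_of_mem (hg : DiagonalShiftInvariant g) {w : ι → ℂ}
    (hw : w ∈ upperHalfPlanePi ι) : extendByDiagonalShift g w = g w :=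
  hg w hw _ (add_mul_I_mem_upperHalfPlanePi (lt_add_one ‖w‖))

theorem hasFDerivAt_extendByDiagonalShift (hg : DiagonalShiftInvariant g) {w : ι → ℂ} {T : ℝ}
    (hT : ‖w‖ < T) {g' : (ι → ℂ) →L[ℂ] ℂ} (hd : HasFDerivAt g g' (fun j => w j + T * I)) :
    HasFDerivAt (extendByDiagonalShift g) g' w := by
  have hshift : HasFDerivAt (fun v : ι → ℂ => fun j => v j + T * I)
      (ContinuousLinearMap.id ℂ _) w :=
    (hasFDerivAt_id w).add_const _
  refine (hd.comp w hshift).congr_of_eventuallyEq ?_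
  filter_upwards [(continuous_norm.tendsto w).eventually (gt_mem_nhds hT)] with v hv
  exact extendByDiagonalShift_eq_of_norm_lt hg hv

theorem differentiable_extendByDiagonalShift (hgd : DifferentiableOn ℂ g (upperHalfPlanePi ι))
    (hg : DiagonalShiftInvariant g) : Differentiable ℂ (extendByDiagonalShift g) := fun w =>
  have hmem := add_mul_I_mem_upperHalfPlanePi (lt_add_one ‖w‖)
  (hasFDerivAt_extendByDiagonalShift hg (lt_add_one ‖w‖)
    (hgd.differentiableAt (isOpen_upperHalfPlanePi.mem_nhds hmem)).hasFDerivAt).differentiableAt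

theorem DiagonalShiftEquivariant.neg_two_mul_le_im_extendByDiagonalShift_sub
    {f : (ι → ℂ) → ℂ} (hf : DiagonalShiftEquivariant f)
    (hmaps : ∀ z ∈ upperHalfPlanePi ι, 0 < (f z).im) {L : (ι → ℂ) →L[ℂ] ℂ} (hL : ‖L‖ ≤ 1)
    (w : ι → ℂ) : -(2 * (1 + ‖w‖)) ≤ (extendByDiagonalShift (fun v => f v - L v) w).im := by
  set T := ‖w‖ + 1
  set v : ι → ℂ := fun j => w j + T * I
  have hf_im : T - ‖w‖ ≤ (f v).im :=
    hf.le_im hmaps (add_mul_I_mem_upperHalfPlanePi (lt_add_one ‖w‖)) (sub_norm_le_im_add_mul_I w T)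
  have hL_im : (L v).im ≤ ‖w‖ + T := calc
    (L v).im ≤ ‖L‖ * ‖v‖ := (im_le_norm _).trans (L.le_opNorm v)
    _ ≤ 1 * (‖w‖ + ‖(T : ℂ) * I‖) := by
      gcongr
      exact (norm_add_le w fun _ => (T : ℂ) * I).trans (by gcongr; exact pi_norm_const_le _)
    _ = ‖w‖ + T := by
      rw [one_mul, norm_mul, norm_I, mul_one, norm_real, Real.norm_of_nonneg (by positivity)]
  change _ ≤ (f v - L v).im
  rw [sub_im]
  linarith

end Extension

section WeightedMean

variable {ι : Type*} [Fintype ι]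

noncomputable def weightedMean (α : ι → ℝ) : (ι → ℂ) →L[ℂ] ℂ :=
  ∑ j, (α j : ℂ) • ContinuousLinearMap.proj j

theorem weightedMean_apply (α : ι → ℝ) (v : ι → ℂ) :
    weightedMean α v = ∑ j, (α j : ℂ) * v j := by
  simp [weightedMean]

theorem weightedMean_const {α : ι → ℝ} (hsum : ∑ j, α j = 1) (μ : ℂ) :
    weightedMean α (fun _ => μ) = μ := by
  simp [weightedMean_apply, ← Finset.sum_mul, ← ofReal_sum, hsum]

theorem norm_weightedMean_le {α : ι → ℝ} (hα : ∀ j, 0 ≤ α j) (hsum : ∑ j, α j = 1) :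
    ‖weightedMean α‖ ≤ 1 := by
  refine ContinuousLinearMap.opNorm_le_bound _ zero_le_one fun v => ?_
  calc ‖weightedMean α v‖ ≤ ∑ j, α j * ‖v j‖ := by
        rw [weightedMean_apply]
        refine (norm_sum_le _ _).trans_eq (Finset.sum_congr rfl fun j _ => ?_)
        rw [norm_mul, norm_real, Real.norm_of_nonneg (hα j)]
    _ ≤ ∑ j, α j * ‖v‖ := by gcongr with j; exacts [hα j, norm_le_pi_norm v j]
    _ = 1 * ‖v‖ := by rw [← Finset.sum_mul, hsum]

theorem fderiv_eq_weightedMean [DecidableEq ι] {f : (ι → ℂ) → ℂ} {α : ι → ℝ} {p : ι → ℂ}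
    (hB : ∀ j, fderiv ℂ f p (Pi.single j 1) = α j) : fderiv ℂ f p = weightedMean α := by
  refine ContinuousLinearMap.coe_injective ((Pi.basisFun ℂ ι).ext fun j => ?_)
  simp [hB j, weightedMean_apply, Pi.single_apply]

end WeightedMean

/-- Let `α_1,…,α_n` be positive reals summing to 1, and `f : ℍⁿ → ℍ`
holomorphic with (A) `f(λ,…,λ) = λ`, (B) `∂f/∂z_j(λ,…,λ) = α_j`, and
(C) `f(z + t𝟏) = f(z) + t` for all real `t`. Then `f(z) = ∑ j, α_j z_j`. -/
theorem translation_invariant_rigidity {n : ℕ} (α : Fin n → ℝ)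
    (hα : ∀ j, 0 < α j) (hsum : ∑ j, α j = 1)
    (f : (Fin n → ℂ) → ℂ)
    (hf : DifferentiableOn ℂ f {z : Fin n → ℂ | ∀ j, 0 < (z j).im})
    (hmaps : ∀ z : Fin n → ℂ, (∀ j, 0 < (z j).im) → 0 < (f z).im)
    (hA : ∀ l : ℂ, 0 < l.im → f (fun _ => l) = l)
    (hB : ∀ l : ℂ, 0 < l.im → ∀ j, fderiv ℂ f (fun _ => l) (Pi.single j 1) = (α j : ℂ))
    (hC : ∀ z : Fin n → ℂ, (∀ j, 0 < (z j).im) → ∀ t : ℝ,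
      f (fun j => z j + (t : ℂ)) = f z + t) :
    ∀ z : Fin n → ℂ, (∀ j, 0 < (z j).im) → f z = ∑ j, (α j : ℂ) * z j := by
  intro z hz
  have hequiv : DiagonalShiftEquivariant f := diagonalShiftEquivariant_of_real hf hC
  set g : (Fin n → ℂ) → ℂ := fun v => f v - weightedMean α v
  have hinv : DiagonalShiftInvariant g := hequiv.sub_clm (weightedMean_const hsum)
  have hI : (fun _ : Fin n => I) ∈ upperHalfPlanePi (Fin n) := fun _ => by simp
  have hG0 : extendByDiagonalShift g 0 = 0 := by
    simp [extendByDiagonalShift, g, hA I (by simp), weightedMean_const hsum]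
  have hDG0 : HasFDerivAt (extendByDiagonalShift g) (0 : (Fin n → ℂ) →L[ℂ] ℂ) 0 := by
    refine hasFDerivAt_extendByDiagonalShift hinv (T := 1) (by simp) ?_
    simp only [Pi.zero_apply, zero_add, ofReal_one, one_mul]
    have hfd := (hf.differentiableAt (isOpen_upperHalfPlanePi.mem_nhds hI)).hasFDerivAt
    rw [fderiv_eq_weightedMean (hB I (by simp))] at hfd
    have := hfd.fun_sub (weightedMean α).hasFDerivAt
    rwa [sub_self] at this
  have hgd : DifferentiableOn ℂ g (upperHalfPlanePi (Fin n)) :=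
    hf.sub (weightedMean α).differentiable.differentiableOn
  have hGz := eq_zero_of_neg_le_im (differentiable_extendByDiagonalShift hgd hinv) hG0 hDG0
    two_pos (hequiv.neg_two_mul_le_im_extendByDiagonalShift_sub hmaps
      (norm_weightedMean_le (fun j => (hα j).le) hsum)) z
  rw [extendByDiagonalShift_eq_of_mem hinv hz] at hGz
  exact (sub_eq_zero.mp hGz).trans (weightedMean_apply α z)
end

section
/- Let V ⊂ ℂⁿ be the real subspace of points of the form (r + t₁i, …, r + tₙi) with r, t₁,…,tₙ ∈ ℝ and ∑ t_j = 0. Let U ⊂ ℂⁿ be a connected open set with U ∩ V ≠ ∅, and let h : U → ℂ be holomorphic vanishing on U ∩ V. Then h ≡ 0 on U. -/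
/-!
The `ℂ`-linear automorphism `w ↦ m(w) 𝟙 + i (w - m(w) 𝟙)` of `ℂⁿ`, where `m(w)` is the mean of the
coordinates, maps `ℝⁿ` onto `V`; so it suffices to prove the statement with `ℝⁿ` in place of `V`.
A holomorphic function vanishing on `ℝⁿ` near a real point `c` vanishes on a ball around `c`:
on the complex line `ζ ↦ x + ζ y` through `w = x + i y` it vanishes at the real parameters, so it
vanishes at `ζ = i` by the one-variable identity theorem. Lines also propagate local vanishing
through the connected open set `U`.
-/

open Complex Metric Set Filter Topology

def realPoints (ι : Type*) : Set (ι → ℂ) := {z | ∀ j, (z j).im = 0}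

theorem frequently_im_eq_zero_nhdsNE_zero : ∃ᶠ ζ in 𝓝[≠] (0 : ℂ), ζ.im = 0 := by
  have hofReal : Tendsto ((↑) : ℝ → ℂ) (𝓝[≠] 0) (𝓝[≠] 0) :=
    tendsto_nhdsWithin_of_tendsto_nhds_of_eventually_within _
      ((continuous_ofReal.tendsto' 0 0 ofReal_zero).mono_left nhdsWithin_le_nhds)
      (eventually_nhdsWithin_of_forall fun _ ht => ofReal_ne_zero.2 ht)
  exact hofReal.frequently (Frequently.of_forall fun t => ofReal_im t)

section

variable {E F : Type*} [NormedAddCommGroup E] [NormedSpace ℂ E]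
  [NormedAddCommGroup F] [NormedSpace ℂ F] [CompleteSpace F]

theorem DifferentiableOn.eq_zero_on_line_of_frequently_eq_zero {f : E → F} {s : Set E}
    (hf : DifferentiableOn ℂ f s) (hs : IsOpen s) (hsc : Convex ℝ s) {x v : E} (hx : x ∈ s)
    (hfreq : ∃ᶠ ζ in 𝓝[≠] (0 : ℂ), f (x + ζ • v) = 0) {ζ : ℂ} (hζ : x + ζ • v ∈ s) :
    f (x + ζ • v) = 0 := by
  set line : ℂ → E := fun ζ => x + ζ • v
  have hline : Differentiable ℂ line := (differentiable_id.smul_const v).const_add x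
  have hlinear : IsLinearMap ℝ fun ζ : ℂ => ζ • v :=
    ⟨fun a b => add_smul a b v, fun c ζ => smul_assoc c ζ v⟩
  have hD : Convex ℝ (line ⁻¹' s) := (hsc.translate_preimage_right x).is_linear_preimage hlinear
  have hfD : AnalyticOnNhd ℂ (f ∘ line) (line ⁻¹' s) :=
    (hf.comp hline.differentiableOn (mapsTo_preimage line s)).analyticOnNhd
      (hs.preimage hline.continuous)
  exact hfD.eqOn_zero_of_preconnected_of_frequently_eq_zero hD.isPreconnected
    (by simpa [line] using hx) hfreq hζ

theorem DifferentiableOn.eqOn_zero_of_preconnected_of_eventuallyEq_zero {f : E → F}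
    {U : Set E} (hf : DifferentiableOn ℂ f U) (hU : IsOpen U) (hUc : IsPreconnected U)
    {z₀ : E} (h₀ : z₀ ∈ U) (hfz₀ : f =ᶠ[𝓝 z₀] 0) : EqOn f 0 U := by
  set W : Set E := {z | f =ᶠ[𝓝 z] 0}
  have hWclosed : closure W ∩ U ⊆ W := by
    rintro z ⟨hzW, hzU⟩
    obtain ⟨r, hr, hrU⟩ := Metric.isOpen_iff.1 hU z hzU
    obtain ⟨w, hwW, hzw⟩ := Metric.mem_closure_iff.1 hzW r hr
    have hw : w ∈ ball z r := mem_ball_comm.1 hzw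
    have hball : EqOn f 0 (ball z r) := fun z' hz' => by
      have hline : Tendsto (fun ζ : ℂ => w + ζ • (z' - w)) (𝓝 0) (𝓝 w) := by
        simpa using ((continuous_id.smul continuous_const).const_add w).tendsto (0 : ℂ)
      have := (hf.mono hrU).eq_zero_on_line_of_frequently_eq_zero isOpen_ball
        (convex_ball z r) hw ((hline.eventually hwW).filter_mono nhdsWithin_le_nhds).frequently
        (ζ := 1) (by simpa using hz')
      simpa using this
    exact eventually_of_mem (ball_mem_nhds z hr) hball
  exact fun z hz => (hUc.subset_of_closure_inter_subset isOpen_setOfPred_eventually_nhds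
    ⟨z₀, h₀, hfz₀⟩ hWclosed hz).self_of_nhds

end

section

variable {F : Type*} [NormedAddCommGroup F] [NormedSpace ℂ F] [CompleteSpace F]
variable {ι : Type*} [Fintype ι]

theorem DifferentiableOn.eqOn_zero_ball_of_eqOn_zero_realPoints {f : (ι → ℂ) → F} {c : ι → ℂ}
    {ρ : ℝ} (hc : c ∈ realPoints ι) (hf : DifferentiableOn ℂ f (ball c ρ))
    (hvan : EqOn f 0 (ball c ρ ∩ realPoints ι)) : EqOn f 0 (ball c ρ) := by
  intro z hz
  set x : ι → ℂ := fun j => ((z j).re : ℂ)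
  set v : ι → ℂ := fun j => ((z j).im : ℂ)
  have hzxv : z = x + I • v := funext fun j => by
    simp only [x, v, Pi.add_apply, Pi.smul_apply, smul_eq_mul]
    rw [mul_comm]
    exact (re_add_im _).symm
  have hx : x ∈ ball c ρ := by
    refine lt_of_le_of_lt ((dist_pi_le_iff dist_nonneg).2 fun j => ?_) hz
    have hxc : x j - c j = ((z j - c j).re : ℂ) := by
      apply Complex.ext <;> simp [x, hc j]
    rw [dist_eq_norm, hxc, norm_real, Real.norm_eq_abs]
    exact (abs_re_le_norm _).trans ((dist_eq_norm _ _).symm.trans_le (dist_le_pi_dist z c j))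
  have hreal : ∀ ζ : ℂ, ζ.im = 0 → x + ζ • v ∈ realPoints ι := fun ζ hζ j => by
    simp [x, v, hζ]
  have hnear : ∀ᶠ ζ in 𝓝 (0 : ℂ), x + ζ • v ∈ ball c ρ := by
    have : Tendsto (fun ζ : ℂ => x + ζ • v) (𝓝 0) (𝓝 x) := by
      simpa using ((continuous_id.smul continuous_const).const_add x).tendsto (0 : ℂ)
    exact this.eventually (isOpen_ball.mem_nhds hx)
  have hfreq : ∃ᶠ ζ in 𝓝[≠] (0 : ℂ), f (x + ζ • v) = 0 :=
    (frequently_im_eq_zero_nhdsNE_zero.and_eventually (hnear.filter_mono nhdsWithin_le_nhds)).mono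
      fun ζ ⟨hζ, hζc⟩ => hvan ⟨hζc, hreal ζ hζ⟩
  rw [hzxv] at hz ⊢
  exact hf.eq_zero_on_line_of_frequently_eq_zero isOpen_ball (convex_ball c ρ) hx hfreq hz

theorem DifferentiableOn.eqOn_zero_of_preconnected_of_eqOn_zero_realPoints
    {f : (ι → ℂ) → F} {U : Set (ι → ℂ)} (hf : DifferentiableOn ℂ f U) (hU : IsOpen U)
    (hUc : IsPreconnected U) (hne : (U ∩ realPoints ι).Nonempty)
    (hvan : EqOn f 0 (U ∩ realPoints ι)) : EqOn f 0 U := by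
  obtain ⟨c, hcU, hc⟩ := hne
  obtain ⟨ρ, hρ, hρU⟩ := Metric.isOpen_iff.1 hU c hcU
  have hball : EqOn f 0 (ball c ρ) := (hf.mono hρU).eqOn_zero_ball_of_eqOn_zero_realPoints hc
    fun z hz => hvan ⟨hρU hz.1, hz.2⟩
  exact hf.eqOn_zero_of_preconnected_of_eventuallyEq_zero hU hUc hcU
    (eventually_of_mem (ball_mem_nhds c hρ) hball)

end

namespace Polarization

variable {n : ℕ}

noncomputable def mean (w : Fin n → ℂ) : ℂ := (∑ j, w j) / n

theorem sum_eq_mul_mean (w : Fin n → ℂ) : ∑ j, w j = n * mean w := by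
  rcases eq_or_ne n 0 with rfl | hn
  · simp
  · rw [mean, mul_div_cancel₀ _ (Nat.cast_ne_zero.2 hn)]

theorem mean_add (w u : Fin n → ℂ) : mean (w + u) = mean w + mean u := by
  simp only [mean, Pi.add_apply, Finset.sum_add_distrib, add_div]

theorem mean_smul (s : ℂ) (w : Fin n → ℂ) : mean (s • w) = s * mean w := by
  simp only [mean, Pi.smul_apply, smul_eq_mul, ← Finset.mul_sum, mul_div_assoc]

/-- `twist s` fixes the diagonal `ℂ 𝟙` and multiplies the hyperplane `∑ j, w j = 0` by `s`. -/
noncomputable def twist (s : ℂ) : (Fin n → ℂ) →ₗ[ℂ] (Fin n → ℂ) where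
  toFun w j := mean w + s * (w j - mean w)
  map_add' w u := funext fun j => by simp only [mean_add, Pi.add_apply]; ring
  map_smul' c w := funext fun j => by
    simp only [mean_smul, Pi.smul_apply, smul_eq_mul, RingHom.id_apply]; ring

theorem twist_apply (s : ℂ) (w : Fin n → ℂ) (j : Fin n) :
    twist s w j = mean w + s * (w j - mean w) := rfl

theorem mean_twist (s : ℂ) (w : Fin n → ℂ) : mean (twist s w) = mean w := by
  rcases eq_or_ne n 0 with rfl | hn
  · simp [mean]
  · have hn' : (n : ℂ) ≠ 0 := Nat.cast_ne_zero.2 hn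
    rw [mean, div_eq_iff hn']
    simp only [twist_apply, Finset.sum_add_distrib, ← Finset.mul_sum, Finset.sum_sub_distrib,
      Finset.sum_const, Finset.card_univ, Fintype.card_fin, nsmul_eq_mul, sum_eq_mul_mean w]
    ring

theorem twist_twist (s t : ℂ) (w : Fin n → ℂ) : twist s (twist t w) = twist (s * t) w :=
  funext fun j => by simp only [twist_apply, mean_twist]; ring

theorem twist_one (w : Fin n → ℂ) : twist 1 w = w :=
  funext fun j => by simp only [twist_apply]; ring

noncomputable def equiv (n : ℕ) : (Fin n → ℂ) ≃L[ℂ] (Fin n → ℂ) :=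
  (LinearEquiv.ofLinearMap (twist I) (twist (-I))
    (LinearMap.ext fun w => by simp [twist_twist, twist_one])
    (LinearMap.ext fun w => by simp [twist_twist, twist_one])).toContinuousLinearEquiv

theorem equiv_image_realPoints :
    equiv n '' realPoints (Fin n) = {v | ∃ (r : ℝ) (t : Fin n → ℝ),
      (∑ j, t j = 0) ∧ ∀ j, v j = (r : ℂ) + (t j : ℂ) * I} := by
  ext v
  constructor
  · rintro ⟨q, hq, rfl⟩
    have hmean : mean q = ((mean q).re : ℂ) := by
      apply Complex.ext <;> simp [mean, im_sum, hq _]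
    refine ⟨(mean q).re, fun j => (q j).re - (mean q).re, ?_, fun j => ?_⟩
    · have hsum : ∑ j, (q j).re = n * (mean q).re := by
        simpa [re_sum, mul_re] using congrArg re (sum_eq_mul_mean q)
      simp [Finset.sum_sub_distrib, hsum]
    · change twist I q j = _
      have hqj : q j = ((q j).re : ℂ) := Complex.ext (by simp) (by simp [hq j])
      conv_lhs => rw [twist_apply, hmean, hqj]
      push_cast
      ring
  · rintro ⟨r, t, ht, hv⟩
    refine ⟨fun j => ((r + t j : ℝ) : ℂ), fun j => ofReal_im _, funext fun j => ?_⟩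
    have hn : (n : ℂ) ≠ 0 := Nat.cast_ne_zero.2 (Fin.pos j).ne'
    have hmean : mean (fun j => ((r + t j : ℝ) : ℂ)) = r := by
      rw [mean, div_eq_iff hn]
      push_cast
      simp [Finset.sum_add_distrib, ← ofReal_sum, ht, mul_comm]
    change twist I _ j = v j
    rw [twist_apply, hmean, hv]
    push_cast
    ring

end Polarization

/-- Let `V ⊂ ℂⁿ` be the real subspace of points `(r + t₁ i, …, r + tₙ i)`
with `r, t_j ∈ ℝ` and `∑ t_j = 0`. If `U` is a connected open set meeting `V` and
`h : U → ℂ` is holomorphic and vanishes on `U ∩ V`, then `h ≡ 0` on `U`. -/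
theorem polarization_principle {n : ℕ}
    (V : Set (Fin n → ℂ))
    (hV : V = {v : Fin n → ℂ | ∃ (r : ℝ) (t : Fin n → ℝ),
      (∑ j, t j = 0) ∧ ∀ j, v j = (r : ℂ) + (t j : ℂ) * Complex.I})
    (U : Set (Fin n → ℂ)) (hUopen : IsOpen U) (hUconn : IsConnected U)
    (hUV : (U ∩ V).Nonempty)
    (h : (Fin n → ℂ) → ℂ) (hh : DifferentiableOn ℂ h U)
    (hvan : ∀ z ∈ U ∩ V, h z = 0) :
    ∀ z ∈ U, h z = 0 := by
  rw [hV, ← Polarization.equiv_image_realPoints] at hUV hvan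
  set φ := Polarization.equiv n
  have hpullback : EqOn (h ∘ φ) 0 (φ ⁻¹' U) := by
    refine DifferentiableOn.eqOn_zero_of_preconnected_of_eqOn_zero_realPoints
      (hh.comp φ.differentiableOn (mapsTo_preimage φ U)) (hUopen.preimage φ.continuous) ?_ ?_ ?_
    · rw [← φ.image_symm_eq_preimage]
      exact hUconn.isPreconnected.image _ φ.symm.continuous.continuousOn
    · obtain ⟨_, hpU, q, hq, rfl⟩ := hUV
      exact ⟨q, hpU, hq⟩
    · rintro q ⟨hqU, hq⟩
      exact hvan _ ⟨hqU, mem_image_of_mem φ hq⟩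
  intro z hz
  simpa using hpullback (show φ.symm z ∈ φ ⁻¹' U by simpa)
end

section
/- Let U ⊂ ℂⁿ be a connected open set and M ⊂ U a nonempty smooth real submanifold such that for every p ∈ M, the real tangent space T_pM together with i·T_pM spans ℂⁿ as a real vector space. If h : U → ℂ is holomorphic and vanishes on M, then h is identically zero on U. -/
open Complex Metric Set Filter

variable {F : Type*} [NormedAddCommGroup F] [NormedSpace ℂ F] [CompleteSpace F]

lemma oneD_coeff_bound {φ : ℂ → F} {ρ : NNReal} (hρ : 0 < (ρ : ℝ)) {M : ℝ}
    (hφ : DifferentiableOn ℂ φ (closedBall 0 (ρ : ℝ)))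
    (hM : ∀ τ ∈ closedBall (0 : ℂ) (ρ : ℝ), ‖φ τ‖ ≤ M) (k : ℕ) :
    ‖cauchyPowerSeries φ 0 ρ k‖ ≤ M * ((ρ : ℝ)⁻¹) ^ k := by
  refine (norm_cauchyPowerSeries_le φ 0 ρ k).trans ?_
  have habs : |(ρ : ℝ)| = (ρ : ℝ) := abs_of_nonneg ρ.2
  rw [habs]
  have hcont : ContinuousOn (fun θ : ℝ => ‖φ (circleMap 0 ρ θ)‖) (Set.uIcc 0 (2 * Real.pi)) := by
    apply (hφ.continuousOn.comp (continuous_circleMap 0 ρ).continuousOn ?_).norm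
    intro θ _
    have := circleMap_mem_sphere (0 : ℂ) ρ.2 θ
    exact sphere_subset_closedBall this
  have hint : (∫ θ : ℝ in (0)..2 * Real.pi, ‖φ (circleMap 0 ρ θ)‖) ≤ 2 * Real.pi * M := by
    have h1 : (∫ θ : ℝ in (0)..2 * Real.pi, ‖φ (circleMap 0 ρ θ)‖) ≤
        ∫ _ : ℝ in (0)..2 * Real.pi, M := by
      apply intervalIntegral.integral_mono_on Real.two_pi_pos.le
      · exact hcont.intervalIntegrable
      · exact intervalIntegrable_const
      · intro θ _
        exact hM _ (sphere_subset_closedBall (circleMap_mem_sphere (0 : ℂ) ρ.2 θ))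
    simpa using h1
  have h2 : (2 * Real.pi)⁻¹ * ∫ θ : ℝ in (0)..2 * Real.pi, ‖φ (circleMap 0 ρ θ)‖ ≤ M := by
    rw [inv_mul_le_iff₀ Real.two_pi_pos]
    linarith [hint]
  have h3 : (0:ℝ) ≤ ((ρ : ℝ)⁻¹) ^ k := by positivity
  exact mul_le_mul_of_nonneg_right h2 h3

lemma oneD_deriv_bound {φ : ℂ → F} {ρ : NNReal} (hρ : 0 < (ρ : ℝ)) {M : ℝ}
    (hφ : DifferentiableOn ℂ φ (closedBall 0 (ρ : ℝ)))
    (hM : ∀ τ ∈ closedBall (0 : ℂ) (ρ : ℝ), ‖φ τ‖ ≤ M) :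
    ‖deriv φ 0‖ ≤ M * (ρ : ℝ)⁻¹ := by
  have hρ' : 0 < ρ := by exact_mod_cast hρ
  have hb := hφ.hasFPowerSeriesOnBall hρ'
  have hd : deriv φ 0 = (cauchyPowerSeries φ 0 ρ).coeff 1 := hb.hasFPowerSeriesAt.deriv
  rw [hd]
  have h1 : ‖(cauchyPowerSeries φ 0 ρ).coeff 1‖ ≤ ‖cauchyPowerSeries φ 0 ρ 1‖ := by
    calc ‖(cauchyPowerSeries φ 0 ρ).coeff 1‖
        = ‖cauchyPowerSeries φ 0 ρ 1 fun _ => (1 : ℂ)‖ := rfl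
      _ ≤ ‖cauchyPowerSeries φ 0 ρ 1‖ * ∏ _i : Fin 1, ‖(1 : ℂ)‖ :=
          (cauchyPowerSeries φ 0 ρ 1).le_opNorm _
      _ = ‖cauchyPowerSeries φ 0 ρ 1‖ := by
          rw [Finset.prod_const]; norm_num
  refine h1.trans ?_
  simpa using oneD_coeff_bound hρ hφ hM 1

lemma oneD_taylor2 {φ : ℂ → F} {ρ : NNReal} (hρ : 0 < (ρ : ℝ)) {M : ℝ} (hM0 : 0 ≤ M)
    (hφ : DifferentiableOn ℂ φ (closedBall 0 (ρ : ℝ)))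
    (hM : ∀ τ ∈ closedBall (0 : ℂ) (ρ : ℝ), ‖φ τ‖ ≤ M) {t : ℂ}
    (ht : ‖t‖ ≤ (ρ : ℝ) / 2) :
    ‖φ t - φ 0 - t • deriv φ 0‖ ≤ 2 * M * ((ρ : ℝ)⁻¹) ^ 2 * ‖t‖ ^ 2 := by
  have hρ' : 0 < ρ := by exact_mod_cast hρ
  have hb := hφ.hasFPowerSeriesOnBall hρ'
  set p := cauchyPowerSeries φ 0 ρ with hp
  have htρ : ‖t‖ < (ρ : ℝ) := lt_of_le_of_lt ht (by linarith)
  have hmem : t ∈ Metric.eball (0 : ℂ) ρ := by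
    rw [Metric.emetric_ball_nnreal]
    simpa [mem_ball, dist_zero_right] using htρ
  have hsum := hb.hasSum hmem
  -- value of first two terms
  have h0 : (p 0 fun _ => t) = φ 0 := hb.coeff_zero fun _ => t
  have h1 : (p 1 fun _ => t) = t • deriv φ 0 := by
    have hd : deriv φ 0 = p.coeff 1 := hb.hasFPowerSeriesAt.deriv
    calc (p 1 fun _ => t) = p 1 (fun _ => t • (1 : ℂ)) := by norm_num
      _ = (∏ _i : Fin 1, t) • (p 1 fun _ => (1 : ℂ)) := (p 1).map_smul_univ _ _
      _ = t • p.coeff 1 := by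
          rw [Finset.prod_const, Finset.card_univ, Fintype.card_fin, pow_one]; rfl
      _ = t • deriv φ 0 := by rw [hd]
  have hsum2 : HasSum (fun k => p (k + 2) fun _ => t)
      (φ (0 + t) - ∑ i ∈ Finset.range 2, (p i fun _ => t)) :=
    (hasSum_nat_add_iff' 2).mpr hsum
  have hrange : (∑ i ∈ Finset.range 2, (p i fun _ => t)) = φ 0 + t • deriv φ 0 := by
    rw [Finset.sum_range_succ, Finset.sum_range_one, h0, h1]
  rw [hrange] at hsum2
  have heq : φ t - φ 0 - t • deriv φ 0 = ∑' k, (p (k + 2) fun _ => t) := by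
    rw [hsum2.tsum_eq]
    rw [zero_add]
    abel
  rw [heq]
  have hterm : ∀ k : ℕ, ‖(p (k + 2) fun _ => t)‖ ≤
      (M * ((ρ : ℝ)⁻¹) ^ 2 * ‖t‖ ^ 2) * (1 / 2) ^ k := by
    intro k
    have h2 : ‖(p (k + 2) fun _ => t)‖ ≤ ‖p (k + 2)‖ * ‖t‖ ^ (k + 2) :=
      ((p (k + 2)).le_opNorm fun _ => t).trans_eq (by
        rw [Finset.prod_const, Finset.card_univ, Fintype.card_fin])
    have h3 : ‖p (k + 2)‖ * ‖t‖ ^ (k + 2) ≤ (M * ((ρ : ℝ)⁻¹) ^ (k + 2)) * ‖t‖ ^ (k + 2) :=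
      mul_le_mul_of_nonneg_right (oneD_coeff_bound hρ hφ hM (k + 2)) (by positivity)
    refine h2.trans (h3.trans ?_)
    have hhalf : (ρ : ℝ)⁻¹ * ‖t‖ ≤ 1 / 2 := by
      rw [inv_mul_le_iff₀ hρ]
      linarith
    have hkey : ((ρ : ℝ)⁻¹) ^ k * ‖t‖ ^ k ≤ (1 / 2) ^ k := by
      rw [← mul_pow]
      exact pow_le_pow_left₀ (by positivity) hhalf k
    calc M * ((ρ : ℝ)⁻¹) ^ (k + 2) * ‖t‖ ^ (k + 2)
        = (M * ((ρ : ℝ)⁻¹) ^ 2 * ‖t‖ ^ 2) * (((ρ : ℝ)⁻¹) ^ k * ‖t‖ ^ k) := by ring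
      _ ≤ (M * ((ρ : ℝ)⁻¹) ^ 2 * ‖t‖ ^ 2) * (1 / 2) ^ k := by
          exact mul_le_mul_of_nonneg_left hkey (by positivity)
  have hsummaj : Summable fun k : ℕ => (M * ((ρ : ℝ)⁻¹) ^ 2 * ‖t‖ ^ 2) * (1 / 2) ^ k :=
    summable_geometric_two.mul_left _
  have hsnorm : Summable fun k : ℕ => ‖(p (k + 2) fun _ => t)‖ :=
    Summable.of_nonneg_of_le (fun k => norm_nonneg _) hterm hsummaj
  calc ‖∑' k, (p (k + 2) fun _ => t)‖ ≤ ∑' k, ‖(p (k + 2) fun _ => t)‖ :=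
        norm_tsum_le_tsum_norm hsnorm
    _ ≤ ∑' k : ℕ, (M * ((ρ : ℝ)⁻¹) ^ 2 * ‖t‖ ^ 2) * (1 / 2) ^ k :=
        Summable.tsum_le_tsum hterm hsnorm hsummaj
    _ = (M * ((ρ : ℝ)⁻¹) ^ 2 * ‖t‖ ^ 2) * 2 := by
        rw [tsum_mul_left, tsum_geometric_two]
    _ = 2 * M * ((ρ : ℝ)⁻¹) ^ 2 * ‖t‖ ^ 2 := by ring

lemma grad_bound {n : ℕ} {g : (Fin n → ℂ) → F} {z : Fin n → ℂ} {s : ℝ} (hs : 0 < s)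
    {B : ℝ} (hB0 : 0 ≤ B) (hg : DifferentiableOn ℂ g (closedBall z s))
    (hgB : ∀ y ∈ closedBall z s, ‖g y‖ ≤ B) :
    ‖fderiv ℂ g z‖ ≤ B / s := by
  have hgz : DifferentiableAt ℂ g z :=
    ((hg.mono ball_subset_closedBall) z (mem_ball_self hs)).differentiableAt
      (isOpen_ball.mem_nhds (mem_ball_self hs))
  refine ContinuousLinearMap.opNorm_le_bound _ (div_nonneg hB0 hs.le) fun v => ?_
  by_cases hv : v = 0
  · simp [hv, div_nonneg hB0 hs.le]
  have hvn : 0 < ‖v‖ := norm_pos_iff.mpr hv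
  set σr : ℝ := s / ‖v‖ with hσr
  have hσpos : 0 < σr := div_pos hs hvn
  set σ : NNReal := σr.toNNReal with hσ
  have hσc : (σ : ℝ) = σr := Real.coe_toNNReal _ hσpos.le
  set ψ : ℂ → F := fun τ => g (z + τ • v) with hψ
  have hmaps : ∀ τ : ℂ, τ ∈ closedBall (0 : ℂ) (σ : ℝ) → z + τ • v ∈ closedBall z s := by
    intro τ hτ
    rw [mem_closedBall, dist_eq_norm] at hτ ⊢
    have : ‖z + τ • v - z‖ = ‖τ‖ * ‖v‖ := by
      simp [norm_smul]
    rw [this]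
    rw [hσc, hσr] at hτ
    calc ‖τ‖ * ‖v‖ ≤ s / ‖v‖ * ‖v‖ := by
          apply mul_le_mul_of_nonneg_right _ hvn.le
          simpa using hτ
      _ = s := by field_simp
  have hψd : DifferentiableOn ℂ ψ (closedBall 0 (σ : ℝ)) := by
    apply hg.comp
    · intro τ _
      exact ((differentiable_id.smul_const v).const_add z).differentiableAt.differentiableWithinAt
    · exact hmaps
  have hψB : ∀ τ ∈ closedBall (0 : ℂ) (σ : ℝ), ‖ψ τ‖ ≤ B := fun τ hτ => hgB _ (hmaps τ hτ)
  have hσpos' : 0 < (σ : ℝ) := by rw [hσc]; exact hσpos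
  have hder := oneD_deriv_bound hσpos' hψd hψB
  have hline : HasDerivAt (fun τ : ℂ => z + τ • v) v 0 := by
    simpa using ((hasDerivAt_id (0 : ℂ)).smul_const v).const_add z
  have hψder : HasDerivAt ψ (fderiv ℂ g z v) 0 := by
    have hgz' : HasFDerivAt g (fderiv ℂ g z) (z + (0 : ℂ) • v) := by
      simpa using hgz.hasFDerivAt
    have h := hgz'.comp_hasDerivAt 0 hline
    exact h
  rw [hψder.deriv] at hder
  calc ‖fderiv ℂ g z v‖ ≤ B * (σ : ℝ)⁻¹ := hder
    _ = B / s * ‖v‖ := by rw [hσc, hσr]; field_simp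

/-- Difference quotient estimate: for `f` holomorphic near `z`, the difference quotient along
`w` differs from the directional derivative by `O(t)`, with constants uniform in `z`. -/
lemma diffquot_est {n : ℕ} {U : Set (Fin n → ℂ)} (hUopen : IsOpen U)
    {f : (Fin n → ℂ) → F} (hf : DifferentiableOn ℂ f U) {w : Fin n → ℂ} (hw : w ≠ 0)
    {a : Fin n → ℂ} {r M : ℝ} (hr : 0 < r) (hM0 : 0 ≤ M)
    (hball : closedBall a (6 * r) ⊆ U) (hM : ∀ y ∈ closedBall a (6 * r), ‖f y‖ ≤ M)
    {z : Fin n → ℂ} (hz : z ∈ closedBall a (3 * r)) {t : ℂ} (ht0 : t ≠ 0)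
    (ht : ‖t‖ ≤ r / ‖w‖) :
    ‖t⁻¹ • (f (z + t • w) - f z) - fderiv ℂ f z w‖ ≤
      (2 * M * ((2 * (r / ‖w‖))⁻¹) ^ 2) * ‖t‖ := by
  have hwn : 0 < ‖w‖ := norm_pos_iff.mpr hw
  set ρr : ℝ := r / ‖w‖ with hρr
  have hρpos : 0 < ρr := div_pos hr hwn
  set ρ2 : NNReal := (2 * ρr).toNNReal with hρ2def
  have hρ2c : (ρ2 : ℝ) = 2 * ρr := Real.coe_toNNReal _ (by linarith)
  have hρ2pos : 0 < (ρ2 : ℝ) := by rw [hρ2c]; linarith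
  set φ : ℂ → F := fun τ => f (z + τ • w) with hφ
  have hmaps : ∀ τ : ℂ, τ ∈ closedBall (0 : ℂ) (ρ2 : ℝ) → z + τ • w ∈ closedBall a (6 * r) := by
    intro τ hτ
    rw [mem_closedBall, dist_eq_norm] at hτ ⊢
    rw [mem_closedBall, dist_eq_norm] at hz
    have h1 : ‖z + τ • w - a‖ ≤ ‖z - a‖ + ‖τ • w‖ := by
      have : z + τ • w - a = (z - a) + τ • w := by abel
      rw [this]; exact norm_add_le _ _
    have h2 : ‖τ • w‖ ≤ (2 * ρr) * ‖w‖ := by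
      rw [norm_smul]
      apply mul_le_mul_of_nonneg_right _ hwn.le
      simpa [hρ2c] using hτ
    have h3 : (2 * ρr) * ‖w‖ = 2 * r := by rw [hρr]; field_simp
    linarith
  have hφd : DifferentiableOn ℂ φ (closedBall 0 (ρ2 : ℝ)) := by
    apply (hf.mono hball).comp
    · intro τ _
      exact ((differentiable_id.smul_const w).const_add z).differentiableAt.differentiableWithinAt
    · exact hmaps
  have hφB : ∀ τ ∈ closedBall (0 : ℂ) (ρ2 : ℝ), ‖φ τ‖ ≤ M := fun τ hτ => hM _ (hmaps τ hτ)
  have hzU : z ∈ U := hball (by rw [mem_closedBall] at hz ⊢; linarith [dist_nonneg (x := z) (y := a)])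
  have hzU' : U ∈ nhds z := hUopen.mem_nhds hzU
  have hfa : DifferentiableAt ℂ f z := hf.differentiableAt hzU'
  have hline : HasDerivAt (fun τ : ℂ => z + τ • w) w 0 := by
    simpa using ((hasDerivAt_id (0 : ℂ)).smul_const w).const_add z
  have hφder : HasDerivAt φ (fderiv ℂ f z w) 0 := by
    have hfa' : HasFDerivAt f (fderiv ℂ f z) (z + (0 : ℂ) • w) := by
      simpa using hfa.hasFDerivAt
    exact hfa'.comp_hasDerivAt 0 hline
  have ht2 : ‖t‖ ≤ (ρ2 : ℝ) / 2 := by rw [hρ2c]; linarith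
  have htay := oneD_taylor2 hρ2pos hM0 hφd hφB ht2
  rw [hφder.deriv] at htay
  have hφ0 : φ 0 = f z := by simp [hφ]
  have hφt : φ t = f (z + t • w) := rfl
  rw [hφ0, hφt] at htay
  have hkey : t⁻¹ • (f (z + t • w) - f z) - fderiv ℂ f z w =
      t⁻¹ • (f (z + t • w) - f z - t • fderiv ℂ f z w) := by
    rw [smul_sub t⁻¹ (f (z + t • w) - f z) (t • fderiv ℂ f z w), smul_smul,
      inv_mul_cancel₀ ht0, one_smul]
  rw [hkey, norm_smul, norm_inv]
  have htn : 0 < ‖t‖ := norm_pos_iff.mpr ht0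
  calc ‖t‖⁻¹ * ‖f (z + t • w) - f z - t • fderiv ℂ f z w‖
      ≤ ‖t‖⁻¹ * (2 * M * ((ρ2 : ℝ)⁻¹) ^ 2 * ‖t‖ ^ 2) := by
        exact mul_le_mul_of_nonneg_left htay (by positivity)
    _ = (2 * M * ((2 * ρr)⁻¹) ^ 2) * ‖t‖ := by
        rw [hρ2c, pow_two ‖t‖,
          show 2 * M * ((2 * ρr)⁻¹) ^ 2 * (‖t‖ * ‖t‖) =
            ‖t‖ * (2 * M * ((2 * ρr)⁻¹) ^ 2 * ‖t‖) by ring,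
          inv_mul_cancel_left₀ htn.ne']

/-- Key regularity result: the directional derivative of a holomorphic function on an open
subset of `ℂⁿ` is again holomorphic. -/
lemma dirDeriv_differentiableOn {n : ℕ} {U : Set (Fin n → ℂ)} (hUopen : IsOpen U)
    {f : (Fin n → ℂ) → F} (hf : DifferentiableOn ℂ f U) (w : Fin n → ℂ) :
    DifferentiableOn ℂ (fun z => fderiv ℂ f z w) U := by
  intro a ha
  suffices h : DifferentiableAt ℂ (fun z => fderiv ℂ f z w) a from h.differentiableWithinAt
  by_cases hw : w = 0
  · have : (fun z : Fin n → ℂ => fderiv ℂ f z w) = fun _ => (0 : F) :=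
      funext fun z => by rw [hw]; exact (fderiv ℂ f z).map_zero
    rw [this]; exact differentiableAt_const 0
  have hwn : 0 < ‖w‖ := norm_pos_iff.mpr hw
  obtain ⟨R₀, hR₀pos, hR₀⟩ := Metric.isOpen_iff.mp hUopen a ha
  set r : ℝ := R₀ / 12 with hrdef
  have hr : 0 < r := by positivity
  have hball : closedBall a (6 * r) ⊆ U := by
    refine subset_trans ?_ hR₀
    intro y hy
    rw [mem_closedBall] at hy
    rw [mem_ball]
    calc dist y a ≤ 6 * r := hy
      _ < R₀ := by rw [hrdef]; linarith
  obtain ⟨M₀, hM₀⟩ := (isCompact_closedBall a (6 * r)).exists_bound_of_continuousOn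
    (hf.continuousOn.mono hball)
  set M : ℝ := max M₀ 0 with hMdef
  have hM0 : 0 ≤ M := le_max_right _ _
  have hM : ∀ y ∈ closedBall a (6 * r), ‖f y‖ ≤ M := fun y hy =>
    (hM₀ y hy).trans (le_max_left _ _)
  set ρr : ℝ := r / ‖w‖ with hρr
  have hρpos : 0 < ρr := div_pos hr hwn
  set Kc : ℝ := 2 * M * ((2 * ρr)⁻¹) ^ 2 with hKc
  have hKc0 : 0 ≤ Kc := by positivity
  -- the sequence of difference quotients
  set tk : ℕ → ℂ := fun k => ((ρr / 2 ^ (k + 1) : ℝ) : ℂ) with htk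
  have htknorm : ∀ k, ‖tk k‖ = ρr / 2 ^ (k + 1) := by
    intro k
    rw [htk]
    rw [Complex.norm_real, Real.norm_eq_abs, abs_of_pos (by positivity)]
  have htk0 : ∀ k, tk k ≠ 0 := by
    intro k
    have : ‖tk k‖ ≠ 0 := by rw [htknorm k]; positivity
    exact fun h => this (by rw [h, norm_zero])
  have htkle : ∀ k, ‖tk k‖ ≤ ρr := by
    intro k
    rw [htknorm k]
    have h1 : (1 : ℝ) ≤ 2 ^ (k + 1) := one_le_pow₀ (by norm_num)
    calc ρr / 2 ^ (k + 1) ≤ ρr / 1 := by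
          apply div_le_div_of_nonneg_left hρpos.le (by norm_num) h1
      _ = ρr := div_one _
  set q : ℕ → (Fin n → ℂ) → F := fun k z => (tk k)⁻¹ • (f (z + tk k • w) - f z) with hq
  set q' : ℕ → (Fin n → ℂ) → ((Fin n → ℂ) →L[ℂ] F) :=
    fun k z => (tk k)⁻¹ • (fderiv ℂ f (z + tk k • w) - fderiv ℂ f z) with hq'
  -- membership helpers
  have hsub3 : closedBall a (3 * r) ⊆ U := fun y hy => hball (by
    rw [mem_closedBall] at hy ⊢; linarith)
  have hmem_tr : ∀ z ∈ ball a (3 * r), ∀ k, z + tk k • w ∈ U := by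
    intro z hz k
    apply hball
    rw [mem_ball, dist_eq_norm] at hz
    rw [mem_closedBall, dist_eq_norm]
    have h1 : z + tk k • w - a = (z - a) + tk k • w := by abel
    rw [h1]
    have h2 : ‖tk k • w‖ ≤ r := by
      rw [norm_smul]
      calc ‖tk k‖ * ‖w‖ ≤ ρr * ‖w‖ := mul_le_mul_of_nonneg_right (htkle k) hwn.le
        _ = r := by rw [hρr]; field_simp
    calc ‖(z - a) + tk k • w‖ ≤ ‖z - a‖ + ‖tk k • w‖ := norm_add_le _ _
      _ ≤ 3 * r + r := by linarith
      _ ≤ 6 * r := by linarith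
  -- HasFDerivAt for the difference quotients
  have hQ : ∀ k, ∀ z ∈ ball a (3 * r), HasFDerivAt (q k) (q' k z) z := by
    intro k z hz
    have hz1 : z + tk k • w ∈ U := hmem_tr z hz k
    have hz2 : z ∈ U := hball (by
      rw [mem_ball, dist_eq_norm] at hz
      rw [mem_closedBall, dist_eq_norm]; linarith)
    have hd1 : HasFDerivAt (fun y => f (y + tk k • w)) (fderiv ℂ f (z + tk k • w)) z := by
      have h₁ := (hf.differentiableAt (hUopen.mem_nhds hz1)).hasFDerivAt
      have h₂ : HasFDerivAt (fun y : Fin n → ℂ => y + tk k • w)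
          (ContinuousLinearMap.id ℂ (Fin n → ℂ)) z := (hasFDerivAt_id z).add_const _
      simpa [Function.comp_def] using h₁.comp z h₂
    have hd2 : HasFDerivAt f (fderiv ℂ f z) z :=
      (hf.differentiableAt (hUopen.mem_nhds hz2)).hasFDerivAt
    exact (hd1.sub hd2).const_smul _
  -- pointwise convergence of difference quotients to the directional derivative
  have htk_to0 : Tendsto (fun k => Kc * ‖tk k‖) atTop (nhds 0) := by
    have h1 : Tendsto (fun k : ℕ => (1 / 2 : ℝ) ^ k) atTop (nhds 0) :=
      tendsto_pow_atTop_nhds_zero_of_lt_one (by norm_num) (by norm_num)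
    have h2 : (fun k => Kc * ‖tk k‖) = fun k => (Kc * (ρr / 2)) * (1 / 2 : ℝ) ^ k := by
      funext k
      rw [htknorm k, pow_succ', one_div, inv_pow]
      ring
    rw [h2]
    simpa using h1.const_mul (Kc * (ρr / 2))
  have hconv : ∀ z ∈ ball a (3 * r), Tendsto (fun k => q k z) atTop
      (nhds (fderiv ℂ f z w)) := by
    intro z hz
    rw [← tendsto_sub_nhds_zero_iff]
    apply squeeze_zero_norm (fun k => ?_) htk_to0
    exact diffquot_est hUopen hf hw hr hM0 hball hM (ball_subset_closedBall hz)
      (htk0 k) (htkle k)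
  -- the core uniform estimate on derivative differences
  have hcore : ∀ m k : ℕ, ∀ z ∈ ball a r,
      dist (q' m z) (q' k z) ≤ (Kc * (‖tk m‖ + ‖tk k‖)) / (2 * r) := by
    intro m k z hz
    have hsubz : closedBall z (2 * r) ⊆ ball a (3 * r) := by
      intro y hy
      rw [mem_closedBall, dist_eq_norm] at hy
      rw [mem_ball, dist_eq_norm] at hz ⊢
      calc ‖y - a‖ = ‖(y - z) + (z - a)‖ := by abel_nf
        _ ≤ ‖y - z‖ + ‖z - a‖ := norm_add_le _ _
        _ < 2 * r + r := by linarith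
        _ ≤ 3 * r := by linarith
    set g : (Fin n → ℂ) → F := fun y => q m y - q k y with hg
    have hgd : DifferentiableOn ℂ g (closedBall z (2 * r)) := by
      intro y hy
      have hy' := hsubz hy
      exact (((hQ m y hy').sub (hQ k y hy')).differentiableAt).differentiableWithinAt
    have hgB : ∀ y ∈ closedBall z (2 * r), ‖g y‖ ≤ Kc * (‖tk m‖ + ‖tk k‖) := by
      intro y hy
      have hy' : y ∈ closedBall a (3 * r) := ball_subset_closedBall (hsubz hy)
      have e1 := diffquot_est hUopen hf hw hr hM0 hball hM hy' (htk0 m) (htkle m)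
      have e2 := diffquot_est hUopen hf hw hr hM0 hball hM hy' (htk0 k) (htkle k)
      have : g y = (q m y - fderiv ℂ f y w) - (q k y - fderiv ℂ f y w) := by
        rw [hg]; abel
      rw [this]
      calc ‖(q m y - fderiv ℂ f y w) - (q k y - fderiv ℂ f y w)‖
          ≤ ‖q m y - fderiv ℂ f y w‖ + ‖q k y - fderiv ℂ f y w‖ := norm_sub_le _ _
        _ ≤ Kc * ‖tk m‖ + Kc * ‖tk k‖ := add_le_add e1 e2
        _ = Kc * (‖tk m‖ + ‖tk k‖) := by ring
    have hgrad := grad_bound (by positivity : (0:ℝ) < 2 * r)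
      (by positivity : (0:ℝ) ≤ Kc * (‖tk m‖ + ‖tk k‖)) hgd hgB
    have hzball : z ∈ ball a (3 * r) := by
      rw [mem_ball] at hz ⊢; linarith
    have hfg : fderiv ℂ g z = q' m z - q' k z := by
      have h1 := ((hQ m z hzball).sub (hQ k z hzball)).fderiv
      exact h1
    rw [dist_eq_norm, ← hfg]
    exact hgrad
  -- uniform Cauchy property
  have hNgen : ∀ ε > 0, ∃ N : ℕ, ∀ m ≥ N, ∀ k ≥ N, ∀ z ∈ ball a r,
      dist (q' m z) (q' k z) < ε := by
    intro ε hε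
    have hto : Tendsto (fun N : ℕ => (Kc * (ρr / 2 ^ N)) / (2 * r)) atTop (nhds 0) := by
      have h1 : Tendsto (fun N : ℕ => (1 / 2 : ℝ) ^ N) atTop (nhds 0) :=
        tendsto_pow_atTop_nhds_zero_of_lt_one (by norm_num) (by norm_num)
      have h2 : (fun N : ℕ => (Kc * (ρr / 2 ^ N)) / (2 * r)) =
          fun N => (Kc * ρr / (2 * r)) * (1 / 2 : ℝ) ^ N := by
        funext N
        rw [one_div, inv_pow]
        ring
      rw [h2]
      simpa using h1.const_mul (Kc * ρr / (2 * r))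
    have hev := hto.eventually (eventually_lt_nhds hε)
    obtain ⟨N, hN⟩ := hev.exists
    refine ⟨N, fun m hm k hk z hz => ?_⟩
    refine lt_of_le_of_lt ((hcore m k z hz).trans ?_) hN
    apply div_le_div_of_nonneg_right _ (by positivity)
    · apply mul_le_mul_of_nonneg_left _ hKc0
      have hbound : ∀ j, N ≤ j → ‖tk j‖ ≤ ρr / 2 ^ N / 2 := by
        intro j hj
        rw [htknorm j]
        rw [div_div ρr ((2:ℝ) ^ N) 2]
        apply div_le_div_of_nonneg_left hρpos.le (by positivity)
        calc (2:ℝ) ^ N * 2 = 2 ^ (N + 1) := by rw [pow_succ]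
          _ ≤ 2 ^ (j + 1) := by
              apply pow_le_pow_right₀ (by norm_num)
              omega
      have h1 := hbound m hm
      have h2 := hbound k hk
      linarith
  have hucauchy : UniformCauchySeqOn q' atTop (ball a r) :=
    Metric.uniformCauchySeqOn_iff.mpr (by
      intro ε hε
      obtain ⟨N, hN⟩ := hNgen ε hε
      exact ⟨N, fun m hm k hk z hz => hN m hm k hk z hz⟩)
  -- pointwise limits of the derivative sequence
  have hex : ∀ z, z ∈ ball a r → ∃ L, Tendsto (fun k => q' k z) atTop (nhds L) := by
    intro z hz
    apply cauchySeq_tendsto_of_complete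
    rw [Metric.cauchySeq_iff]
    intro ε hε
    obtain ⟨N, hN⟩ := hNgen ε hε
    exact ⟨N, fun m hm k hk => hN m hm k hk z hz⟩
  classical
  set g' : (Fin n → ℂ) → ((Fin n → ℂ) →L[ℂ] F) :=
    fun z => if hz : z ∈ ball a r then (hex z hz).choose else 0 with hg'
  have htu : TendstoUniformlyOn q' g' atTop (ball a r) := by
    apply hucauchy.tendstoUniformlyOn_of_tendsto
    intro z hz
    rw [hg']
    simp only [dif_pos hz]
    exact (hex z hz).choose_spec
  have hfin : HasFDerivAt (fun z => fderiv ℂ f z w) (g' a) a := by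
    have hsub : ball a r ⊆ ball a (3 * r) := ball_subset_ball (by linarith)
    exact hasFDerivAt_of_tendstoUniformlyOn isOpen_ball htu
      (fun k z hz => hQ k z (hsub hz))
      (fun z hz => hconv z (hsub hz)) (mem_ball_self hr)
  exact hfin.differentiableAt

lemma ev_iteratedDeriv_zero {g : ℂ → ℂ} {c : ℂ} (hg : g =ᶠ[nhds c] (fun _ => (0 : ℂ)))
    (k : ℕ) : iteratedDeriv k g c = 0 := by
  induction k generalizing g with
  | zero =>
    simpa [iteratedDeriv_zero] using hg.eq_of_nhds
  | succ k ih =>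
    rw [iteratedDeriv_succ']
    apply ih
    have h1 : deriv g =ᶠ[nhds c] deriv (fun _ => (0 : ℂ)) := hg.deriv
    have h2 : deriv (fun _ : ℂ => (0 : ℂ)) = fun _ => (0 : ℂ) := funext fun y => deriv_const y 0
    rw [h2] at h1
    exact h1

/-- Vanishing along a complex line from vanishing of all directional slice derivatives. -/
lemma slice_vanish_ball {n : ℕ} {U : Set (Fin n → ℂ)} (hUopen : IsOpen U)
    {p₀ v : Fin n → ℂ} {s : ℝ} (hs : 0 < s)
    (G : ℕ → (Fin n → ℂ) → ℂ)
    (hGd : ∀ k, DifferentiableOn ℂ (G k) U)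
    (hGs : ∀ k z, G (k + 1) z = fderiv ℂ (G k) z v)
    (hG0 : ∀ k, G k p₀ = 0)
    (hmaps : ∀ t : ℂ, t ∈ ball (0 : ℂ) s → p₀ + t • v ∈ U)
    {t₁ : ℂ} (ht₁ : t₁ ∈ ball (0 : ℂ) s) : G 0 (p₀ + t₁ • v) = 0 := by
  set g : ℕ → ℂ → ℂ := fun k t => G k (p₀ + t • v) with hgdef
  have hΩ : ∀ t : ℂ, t ∈ ball (0 : ℂ) s → p₀ + t • v ∈ U := hmaps
  have hgderiv : ∀ k, ∀ t ∈ ball (0 : ℂ) s, HasDerivAt (g k) (g (k + 1) t) t := by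
    intro k t ht
    have hmem : p₀ + t • v ∈ U := hΩ t ht
    have hline : HasDerivAt (fun τ : ℂ => p₀ + τ • v) v t := by
      simpa using ((hasDerivAt_id t).smul_const v).const_add p₀
    have hG : HasFDerivAt (G k) (fderiv ℂ (G k) (p₀ + t • v)) (p₀ + t • v) :=
      ((hGd k).differentiableAt (hUopen.mem_nhds hmem)).hasFDerivAt
    have := hG.comp_hasDerivAt t hline
    simpa [hgdef, hGs k, Function.comp_def] using this
  have hgd : ∀ k, DifferentiableOn ℂ (g k) (ball (0 : ℂ) s) := by
    intro k t ht
    exact (hgderiv k t ht).differentiableAt.differentiableWithinAt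
  have hiter : ∀ k, ∀ t ∈ ball (0 : ℂ) s, iteratedDeriv k (g 0) t = g k t := by
    intro k
    induction k with
    | zero => intro t _; rw [iteratedDeriv_zero]
    | succ k ih =>
      intro t ht
      rw [iteratedDeriv_succ]
      have hEv : iteratedDeriv k (g 0) =ᶠ[nhds t] g k :=
        Filter.eventually_of_mem (isOpen_ball.mem_nhds ht) fun y hy => ih y hy
      rw [hEv.deriv_eq]
      exact (hgderiv k t ht).deriv
  have hzero : ∀ k, iteratedDeriv k (g 0) 0 = 0 := by
    intro k
    have h0 : (0 : ℂ) ∈ ball (0 : ℂ) s := mem_ball_self hs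
    rw [hiter k 0 h0]
    have : g k 0 = G k p₀ := by simp [hgdef]
    rw [this]
    exact hG0 k
  have hsum := Complex.hasSum_taylorSeries_on_ball (hgd 0) ht₁
  have hzerosum : HasSum (fun _ : ℕ => (0 : ℂ)) (g 0 t₁) := by
    simp only [hzero, smul_zero] at hsum
    exact hsum
  have := hzerosum.unique hasSum_zero
  simpa [hgdef] using this

/-- Propagation of vanishing along segments inside a ball. -/
lemma spread_zero {n : ℕ} {h : (Fin n → ℂ) → ℂ} {z : Fin n → ℂ} {ρ : ℝ} (hρ : 0 < ρ)
    (hd : DifferentiableOn ℂ h (ball z ρ)) {v : Fin n → ℂ} (hvz : v ∈ ball z (ρ / 4))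
    {ε : ℝ} (hε : 0 < ε) (hvan : ∀ y ∈ ball v ε, h y = 0)
    {w : Fin n → ℂ} (hw : w ∈ ball z (ρ / 4)) : h w = 0 := by
  by_cases hwv : w = v
  · exact hwv ▸ hvan v (mem_ball_self hε)
  have hwvn : 0 < ‖w - v‖ := by
    rw [norm_pos_iff]
    exact fun hc => hwv (by rwa [sub_eq_zero] at hc)
  set L : ℂ → (Fin n → ℂ) := fun t => v + t • (w - v) with hL
  have hmaps : ∀ t : ℂ, t ∈ ball (0 : ℂ) (3 / 2 : ℝ) → L t ∈ ball z ρ := by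
    intro t ht
    rw [mem_ball, dist_zero_right] at ht
    rw [mem_ball, dist_eq_norm] at hvz hw ⊢
    have hwvlt : ‖w - v‖ < ρ / 2 := by
      calc ‖w - v‖ = ‖(w - z) + (z - v)‖ := by abel_nf
        _ ≤ ‖w - z‖ + ‖z - v‖ := norm_add_le _ _
        _ < ρ / 4 + ρ / 4 := by
            have hvz' : ‖z - v‖ < ρ / 4 := by rw [norm_sub_rev]; exact hvz
            exact add_lt_add hw hvz'
        _ = ρ / 2 := by ring
    calc ‖L t - z‖ = ‖(v - z) + t • (w - v)‖ := by
          show ‖v + t • (w - v) - z‖ = _; congr 1; abel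
      _ ≤ ‖v - z‖ + ‖t‖ * ‖w - v‖ := by
          refine (norm_add_le _ _).trans ?_
          rw [norm_smul]
      _ < ρ / 4 + (3 / 2) * (ρ / 2) := by
          apply add_lt_add hvz
          apply mul_lt_mul' ht.le hwvlt (norm_nonneg _) (by norm_num)
      _ = ρ := by ring
  have hLd : Differentiable ℂ L := (differentiable_id.smul_const (w - v)).const_add v
  have hφd : DifferentiableOn ℂ (h ∘ L) (ball (0 : ℂ) (3 / 2 : ℝ)) :=
    hd.comp hLd.differentiableOn hmaps
  have hev : (h ∘ L) =ᶠ[nhds 0] (fun _ => (0 : ℂ)) := by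
    have hb : ball (0 : ℂ) (ε / ‖w - v‖) ∈ nhds (0 : ℂ) :=
      ball_mem_nhds 0 (by positivity)
    refine Filter.eventually_of_mem hb fun t ht => ?_
    rw [mem_ball, dist_zero_right] at ht
    apply hvan
    rw [mem_ball, dist_eq_norm]
    have : L t - v = t • (w - v) := by rw [hL]; exact add_sub_cancel_left v _
    rw [this, norm_smul]

    calc ‖t‖ * ‖w - v‖ < ε / ‖w - v‖ * ‖w - v‖ := by
          exact mul_lt_mul_of_pos_right ht hwvn
      _ = ε := by field_simp
  have h1 : (1 : ℂ) ∈ ball (0 : ℂ) (3 / 2 : ℝ) := by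
    rw [mem_ball, dist_zero_right]
    norm_num
  have hsum := Complex.hasSum_taylorSeries_on_ball hφd h1
  have hzerosum : HasSum (fun _ : ℕ => (0 : ℂ)) ((h ∘ L) 1) := by
    simp only [ev_iteratedDeriv_zero hev, smul_zero] at hsum
    exact hsum
  have := hzerosum.unique hasSum_zero
  have hL1 : L 1 = w := by rw [hL]; simp
  rw [← hL1]
  exact this

lemma totally_real_fderiv_zero {n d : ℕ}
    {f : (Fin n → ℂ) → ℂ} {p : Fin n → ℂ}
    (hf : DifferentiableAt ℂ f p)
    (ψ : (Fin d → ℝ) → (Fin n → ℂ)) (O : Set (Fin d → ℝ)) (x : Fin d → ℝ)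
    (hO : IsOpen O) (hx : x ∈ O) (hψx : ψ x = p)
    (hψ : ContDiffOn ℝ (⊤ : ℕ∞) ψ O)
    (hzero : ∀ y ∈ O, f (ψ y) = 0)
    (hspan : Submodule.span ℝ
        (Set.range (fderiv ℝ ψ x) ∪
          ((fun v => Complex.I • v) '' Set.range (fderiv ℝ ψ x))) = ⊤) :
    fderiv ℂ f p = 0 := by
  have hψd : DifferentiableAt ℝ ψ x :=
    (hψ.contDiffAt (hO.mem_nhds hx)).differentiableAt (by simp)
  have hfR : DifferentiableAt ℝ f p := hf.restrictScalars ℝ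
  have hcomp : (fun y => f (ψ y)) =ᶠ[nhds x] fun _ => 0 := by
    filter_upwards [hO.mem_nhds hx] with y hy using hzero y hy
  have hDcomp : fderiv ℝ (fun y => f (ψ y)) x = 0 := by
    rw [hcomp.fderiv_eq]; simp
  have hc : fderiv ℝ (fun y => f (ψ y)) x = (fderiv ℝ f (ψ x)).comp (fderiv ℝ ψ x) :=
    fderiv_comp x (by rw [hψx]; exact hfR) hψd
  have hrange : ∀ v, fderiv ℝ f p (fderiv ℝ ψ x v) = 0 := by
    intro v
    have := congrArg (fun (L : (Fin d → ℝ) →L[ℝ] ℂ) => L v) (hc.symm.trans hDcomp)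
    simpa [hψx] using this
  have hRC : fderiv ℝ f p = (fderiv ℂ f p).restrictScalars ℝ :=
    hf.fderiv_restrictScalars ℝ
  set D : (Fin n → ℂ) →L[ℝ] ℂ := (fderiv ℂ f p).restrictScalars ℝ with hD
  have hkey : ∀ w, D w = 0 := by
    intro w
    have hw : w ∈ Submodule.span ℝ
        (Set.range (fderiv ℝ ψ x) ∪
          ((fun v => Complex.I • v) '' Set.range (fderiv ℝ ψ x))) := by
      rw [hspan]; exact Submodule.mem_top
    induction hw using Submodule.span_induction with
    | mem w hwmem =>
      rcases hwmem with ⟨v, rfl⟩ | ⟨u, ⟨v, rfl⟩, rfl⟩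
      · rw [← hRC]; exact hrange v
      · have hu : fderiv ℂ f p (fderiv ℝ ψ x v) = 0 := by
          have := hrange v; rwa [hRC] at this
        show fderiv ℂ f p (Complex.I • fderiv ℝ ψ x v) = 0
        rw [ContinuousLinearMap.map_smul, hu, smul_zero]
    | zero => exact D.map_zero
    | add a b _ _ ha hb => rw [D.map_add, ha, hb, add_zero]
    | smul c a _ ha => rw [D.map_smul, ha, smul_zero]
  ext w
  exact hkey w

/-- Let `U ⊂ ℂⁿ` be a connected open set and `M ⊆ U` a nonempty smooth
real submanifold (here given by smooth local parametrizations) such that at each point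
`p ∈ M` the real tangent space `T_pM` together with `i·T_pM` spans `ℂⁿ` over `ℝ`.
If `h` is holomorphic on `U` and vanishes on `M`, then `h ≡ 0` on `U`. -/
theorem totally_real_uniqueness {n d : ℕ}
    (U : Set (Fin n → ℂ)) (hUopen : IsOpen U) (hUconn : IsConnected U)
    (M : Set (Fin n → ℂ)) (hMU : M ⊆ U) (hMne : M.Nonempty)
    (hM : ∀ p ∈ M, ∃ (ψ : (Fin d → ℝ) → (Fin n → ℂ)) (O : Set (Fin d → ℝ))
        (x : Fin d → ℝ),
      IsOpen O ∧ x ∈ O ∧ ψ x = p ∧ ContDiffOn ℝ (⊤ : ℕ∞) ψ O ∧ ψ '' O ⊆ M ∧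
      (∀ᶠ q in nhdsWithin p M, q ∈ ψ '' O) ∧
      Submodule.span ℝ
        (Set.range (fderiv ℝ ψ x) ∪
          ((fun v => Complex.I • v) '' Set.range (fderiv ℝ ψ x))) = ⊤)
    (h : (Fin n → ℂ) → ℂ) (hh : DifferentiableOn ℂ h U)
    (hvan : ∀ p ∈ M, h p = 0) :
    ∀ z ∈ U, h z = 0 := by
  classical
  -- the family of iterated directional derivatives of h in a fixed direction v
  set Fk : (Fin n → ℂ) → ℕ → ((Fin n → ℂ) → ℂ) :=
    fun v k => Nat.rec h (fun _ g => fun z => fderiv ℂ g z v) k with hFkdef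
  have hFks : ∀ v k z, Fk v (k + 1) z = fderiv ℂ (Fk v k) z v := fun v k z => rfl
  have hFkd : ∀ v k, DifferentiableOn ℂ (Fk v k) U := by
    intro v k
    induction k with
    | zero => exact hh
    | succ k ih => exact dirDeriv_differentiableOn hUopen ih v
  have hFkvan : ∀ v k, ∀ q ∈ M, Fk v k q = 0 := by
    intro v k
    induction k with
    | zero => exact hvan
    | succ k ih =>
      intro q hq
      obtain ⟨ψ, O, x, hO, hx, hψx, hψ, hψM, _, hspan⟩ := hM q hq
      have hfd : fderiv ℂ (Fk v k) q = 0 :=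
        totally_real_fderiv_zero
          ((hFkd v k).differentiableAt (hUopen.mem_nhds (hMU hq))) ψ O x hO hx hψx hψ
          (fun y hy => ih _ (hψM ⟨y, hy, rfl⟩)) hspan
      rw [hFks, hfd]
      rfl
  -- local vanishing near a point of M
  obtain ⟨p₀, hp₀⟩ := hMne
  have hp₀U : p₀ ∈ U := hMU hp₀
  obtain ⟨R2, hR2pos, hR2⟩ := Metric.isOpen_iff.mp hUopen p₀ hp₀U
  set R : ℝ := R2 / 2 with hRdef
  have hRpos : 0 < R := by positivity
  have hRsub : ball p₀ R ⊆ U := fun y hy => hR2 (by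
    rw [mem_ball] at hy ⊢; rw [hRdef] at hy; linarith)
  have hloc : ∀ z ∈ ball p₀ R, h z = 0 := by
    intro z hz
    rw [mem_ball, dist_eq_norm] at hz
    set v : Fin n → ℂ := z - p₀ with hv
    have hmaps : ∀ t : ℂ, t ∈ ball (0 : ℂ) (3 / 2 : ℝ) → p₀ + t • v ∈ U := by
      intro t ht
      rw [mem_ball, dist_zero_right] at ht
      apply hR2
      rw [mem_ball, dist_eq_norm]
      have : p₀ + t • v - p₀ = t • v := add_sub_cancel_left p₀ _
      rw [this, norm_smul]
      calc ‖t‖ * ‖v‖ ≤ (3 / 2) * ‖v‖ := mul_le_mul_of_nonneg_right ht.le (norm_nonneg _)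
        _ < (3 / 2) * R := by
            apply mul_lt_mul_of_pos_left _ (by norm_num)
            exact hz
        _ < R2 := by rw [hRdef]; linarith
    have ht₁ : (1 : ℂ) ∈ ball (0 : ℂ) (3 / 2 : ℝ) := by
      rw [mem_ball, dist_zero_right]; norm_num
    have := slice_vanish_ball hUopen (by norm_num : (0 : ℝ) < 3 / 2) (Fk v)
      (hFkd v) (fun k z => hFks v k z) (fun k => hFkvan v k p₀ hp₀) hmaps ht₁
    have hpt : p₀ + (1 : ℂ) • v = z := by rw [hv, one_smul]; abel
    rw [hpt] at this
    exact this
  -- global propagation by a clopen argument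
  set V : Set (Fin n → ℂ) := {z | ∃ ε > 0, ball z ε ⊆ U ∧ ∀ y ∈ ball z ε, h y = 0} with hVdef
  have hVopen : IsOpen V := by
    rw [Metric.isOpen_iff]
    rintro z ⟨ε, hε, hsub, hzero⟩
    refine ⟨ε, hε, fun y hy => ?_⟩
    rw [mem_ball] at hy
    refine ⟨ε - dist y z, by linarith, ?_, ?_⟩
    · intro u hu
      apply hsub
      rw [mem_ball] at hu ⊢
      calc dist u z ≤ dist u y + dist y z := dist_triangle _ _ _
        _ < (ε - dist y z) + dist y z := by linarith
        _ = ε := by ring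
    · intro u hu
      apply hzero
      rw [mem_ball] at hu ⊢
      calc dist u z ≤ dist u y + dist y z := dist_triangle _ _ _
        _ < (ε - dist y z) + dist y z := by linarith
        _ = ε := by ring
  have hp₀V : p₀ ∈ V := ⟨R, hRpos, hRsub, hloc⟩
  have hclosure : ∀ z ∈ U, z ∈ closure V → z ∈ V := by
    intro z hzU hzc
    obtain ⟨ρ, hρpos, hρsub⟩ := Metric.isOpen_iff.mp hUopen z hzU
    obtain ⟨v, hvV, hvd⟩ := Metric.mem_closure_iff.mp hzc (ρ / 4) (by positivity)
    have hvball : v ∈ ball z (ρ / 4) := by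
      rw [mem_ball, dist_comm]; exact hvd
    obtain ⟨ε, hεpos, hεsub, hεzero⟩ := hvV
    refine ⟨ρ / 4, by positivity, fun y hy => hρsub (ball_subset_ball (by linarith) hy),
      fun w hw => ?_⟩
    exact spread_zero hρpos (hh.mono hρsub) hvball hεpos hεzero hw
  have hUV : U ⊆ V := by
    have hpre := hUconn.isPreconnected
    have hcover : U ⊆ V ∪ (closure V)ᶜ := by
      intro y hy
      by_cases hyc : y ∈ closure V
      · exact Or.inl (hclosure y hy hyc)
      · exact Or.inr hyc
    by_contra hcon
    rw [Set.not_subset] at hcon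
    obtain ⟨y, hyU, hyV⟩ := hcon
    have h2 : (U ∩ (closure V)ᶜ).Nonempty :=
      ⟨y, hyU, fun hc => hyV (hclosure y hyU hc)⟩
    obtain ⟨q, hqU, hqV, hqc⟩ := hpre V (closure V)ᶜ hVopen isClosed_closure.isOpen_compl
      hcover ⟨p₀, hp₀U, hp₀V⟩ h2
    exact hqc (subset_closure hqV)
  intro z hz
  obtain ⟨ε, hε, _, hzero⟩ := hUV hz
  exact hzero z (mem_ball_self hε)
end

section
/- For each ν on the unit circle, the function g_ν(z,w) = (ν(z/2 + w/2) − zw)/(ν − (z/2 + w/2)) maps 𝔻² into 𝔻, satisfies g_ν(λ,λ) = λ for all λ ∈ 𝔻, and satisfies ∂g_ν/∂z(λ,λ) = ∂g_ν/∂w(λ,λ) = 1/2 for all λ ∈ 𝔻. -/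
open Complex

/-!
In the Cayley coordinate `C(x) = (ν + x) / (ν - x)`, which maps `𝔻` onto the right half-plane,
`g_ν` is the arithmetic mean: `C(g_ν(z, w)) = (C(z) + C(w)) / 2`. Cleared of denominators, with
`s = (z + w) / 2`, this is the identity
`|ν - s|² - |ν s - z w|² = (|ν - w|² (1 - |z|²) + |ν - z|² (1 - |w|²)) / 2`,
whose right-hand side is positive on `𝔻²`.
-/

noncomputable def bidiskMap (ν z w : ℂ) : ℂ :=
  (ν * (z / 2 + w / 2) - z * w) / (ν - (z / 2 + w / 2))

theorem bidiskMap_comm (ν z w : ℂ) : bidiskMap ν z w = bidiskMap ν w z := by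
  unfold bidiskMap
  ring

theorem ne_of_norm_lt_one {ν s : ℂ} (hν : ‖ν‖ = 1) (hs : ‖s‖ < 1) : s ≠ ν :=
  ne_of_apply_ne norm (hν ▸ hs.ne)

theorem norm_half_add_half_lt_one {z w : ℂ} (hz : ‖z‖ < 1) (hw : ‖w‖ < 1) :
    ‖z / 2 + w / 2‖ < 1 :=
  calc ‖z / 2 + w / 2‖ ≤ ‖z‖ / 2 + ‖w‖ / 2 := by
        simpa only [norm_div, Complex.norm_ofNat] using norm_add_le (z / 2) (w / 2)
    _ < 1 := by linarith

theorem normSq_sub_midpoint_sub_normSq {ν : ℂ} (hν : ‖ν‖ = 1) (z w : ℂ) :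
    normSq (ν - (z / 2 + w / 2)) - normSq (ν * (z / 2 + w / 2) - z * w) =
      (normSq (ν - w) * (1 - normSq z) + normSq (ν - z) * (1 - normSq w)) / 2 := by
  have hν' : normSq ν = 1 := by rw [normSq_eq_norm_sq, hν, one_pow]
  rw [normSq_apply] at hν'
  simp only [normSq_apply, sub_re, sub_im, mul_re, mul_im, add_re, add_im, div_ofNat_re,
    div_ofNat_im]
  linear_combination ((z.re * z.re + z.im * z.im + w.re * w.re + w.im * w.im) / 2
    - ((z.re / 2 + w.re / 2) ^ 2 + (z.im / 2 + w.im / 2) ^ 2)) * hν'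

theorem norm_bidiskMap_lt_one {ν z w : ℂ} (hν : ‖ν‖ = 1) (hz : ‖z‖ < 1) (hw : ‖w‖ < 1) :
    ‖bidiskMap ν z w‖ < 1 := by
  have hden : ν - (z / 2 + w / 2) ≠ 0 :=
    sub_ne_zero.2 (ne_of_norm_lt_one hν (norm_half_add_half_lt_one hz hw)).symm
  have hνw : 0 < normSq (ν - w) := normSq_pos.2 (sub_ne_zero.2 (ne_of_norm_lt_one hν hw).symm)
  have hz' : 0 < 1 - normSq z := by
    rw [sub_pos, normSq_eq_norm_sq]; exact pow_lt_one₀ (norm_nonneg z) hz two_ne_zero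
  have hw' : 0 < 1 - normSq w := by
    rw [sub_pos, normSq_eq_norm_sq]; exact pow_lt_one₀ (norm_nonneg w) hw two_ne_zero
  have hlt : normSq (ν * (z / 2 + w / 2) - z * w) < normSq (ν - (z / 2 + w / 2)) := by
    rw [← sub_pos, normSq_sub_midpoint_sub_normSq hν]
    linarith [mul_pos hνw hz', mul_nonneg (normSq_nonneg (ν - z)) hw'.le]
  rw [bidiskMap, norm_div, div_lt_one (norm_pos_iff.2 hden),
    ← sq_lt_sq₀ (norm_nonneg _) (norm_nonneg _), Complex.sq_norm, Complex.sq_norm]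
  exact hlt

theorem bidiskMap_self {ν l : ℂ} (hl : l ≠ ν) : bidiskMap ν l l = l := by
  rw [bidiskMap, add_halves, div_eq_iff (sub_ne_zero.2 hl.symm)]
  ring

theorem hasDerivAt_bidiskMap_left {ν l : ℂ} (hl : l ≠ ν) :
    HasDerivAt (fun z => bidiskMap ν z l) (1 / 2) l := by
  have hD : ν - (l / 2 + l / 2) ≠ 0 := by
    rw [add_halves]; exact sub_ne_zero.2 hl.symm
  have hnum : HasDerivAt (fun z => ν * (z / 2 + l / 2) - z * l) (ν / 2 - l) l := by
    refine ((((hasDerivAt_id l).div_const 2).add_const (l / 2)).const_mul ν).fun_sub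
      ((hasDerivAt_id l).mul_const l) |>.congr_deriv ?_
    ring
  have hden : HasDerivAt (fun z => ν - (z / 2 + l / 2)) (-(1 / 2)) l :=
    (((hasDerivAt_id l).div_const 2).add_const (l / 2)).const_sub ν
  refine (hnum.fun_div hden hD).congr_deriv ?_
  rw [add_halves] at hD ⊢
  field_simp
  ring

theorem hasDerivAt_bidiskMap_right {ν l : ℂ} (hl : l ≠ ν) :
    HasDerivAt (fun w => bidiskMap ν l w) (1 / 2) l := by
  simpa only [bidiskMap_comm ν l] using hasDerivAt_bidiskMap_left hl

/-- For `ν` on the unit circle, the function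
`g_ν(z,w) = (ν(z/2 + w/2) − zw)/(ν − (z/2 + w/2))` maps `𝔻²` into `𝔻`, satisfies
`g_ν(λ,λ) = λ` on `𝔻`, and has both diagonal partial derivatives equal to `1/2`. -/
theorem extremal_bidisk_maps (ν : ℂ) (hν : ‖ν‖ = 1)
    (g : ℂ → ℂ → ℂ)
    (hg : ∀ z w : ℂ, g z w = (ν * (z / 2 + w / 2) - z * w) / (ν - (z / 2 + w / 2))) :
    (∀ z w : ℂ, ‖z‖ < 1 → ‖w‖ < 1 → ‖g z w‖ < 1) ∧
    (∀ l : ℂ, ‖l‖ < 1 → g l l = l) ∧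
    (∀ l : ℂ, ‖l‖ < 1 →
      deriv (fun z => g z l) l = 1 / 2 ∧ deriv (fun w => g l w) l = 1 / 2) := by
  obtain rfl : g = bidiskMap ν := funext fun z => funext (hg z)
  refine ⟨fun z w hz hw => norm_bidiskMap_lt_one hν hz hw,
    fun l hl => bidiskMap_self (ne_of_norm_lt_one hν hl), fun l hl => ?_⟩
  have hlν := ne_of_norm_lt_one hν hl
  exact ⟨(hasDerivAt_bidiskMap_left hlν).deriv, (hasDerivAt_bidiskMap_right hlν).deriv⟩
end

section
/- For every γ ∈ Aut(𝔻) and every ν ∈ ∂𝔻, the conjugated map (γ · g_ν)(z,w) := γ(g_ν(γ⁻¹z, γ⁻¹w)) equals g_{γ(ν)}, where γ(ν) denotes the boundary extension of γ applied to ν. -/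
/-!
`u = g_ν(z, w)` is the unique solution of `2 (u ν + z w) = (u + ν) (z + w)`, which says that the
pairs `{u, ν}` and `{z, w}` are harmonic (cross-ratio `-1`). Cross-ratios are Möbius invariant:
a Möbius map multiplies this bilinear form by `det² / ∏ (denominators)`. Hence `γ` maps the
harmonic conjugate of `ν` with respect to `γ⁻¹ z, γ⁻¹ w` to the harmonic conjugate of `γ ν` with
respect to `z, w`. What remains is to keep every denominator away from zero: `γ⁻¹` and `g_ν`
map the disk into itself and `γ` maps the circle to itself.
-/

open Complex ComplexConjugate

noncomputable section

theorem normSq_lt_one_of_norm_lt_one {x : ℂ} (hx : ‖x‖ < 1) : normSq x < 1 :=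
  lt_of_not_ge fun h => (one_le_normSq_iff.1 h).not_gt hx

theorem norm_div_lt_one_of_normSq_lt {p q : ℂ} (h : normSq p < normSq q) : ‖p / q‖ < 1 := by
  have hq : q ≠ 0 := normSq_pos.1 ((normSq_nonneg p).trans_lt h)
  rw [norm_div, div_lt_one (norm_pos_iff.2 hq), ← sq_lt_sq₀ (norm_nonneg _) (norm_nonneg _),
    Complex.sq_norm, Complex.sq_norm]
  exact h

theorem one_sub_conj_mul_ne_zero {a x : ℂ} (ha : ‖a‖ < 1) (hx : ‖x‖ ≤ 1) :
    1 - conj a * x ≠ 0 := by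
  have h : ‖conj a * x‖ < 1 := by
    rw [norm_mul, norm_conj]
    exact mul_lt_one_of_nonneg_of_lt_one_left (norm_nonneg a) ha hx
  intro h0
  rw [← sub_eq_zero.1 h0, norm_one] at h
  exact h.false

theorem one_add_conj_mul_ne_zero {a x : ℂ} (ha : ‖a‖ < 1) (hx : ‖x‖ ≤ 1) :
    1 + conj a * x ≠ 0 := by
  simpa [sub_eq_add_neg] using one_sub_conj_mul_ne_zero ha (x := -x) (by rwa [norm_neg])

/-- Vanishes iff the pairs `{u, v}` and `{z, w}` are harmonic, i.e. have cross-ratio `-1`. -/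
def harmonicForm (u v z w : ℂ) : ℂ := 2 * (u * v + z * w) - (u + v) * (z + w)

theorem harmonicForm_mobius (a b c d x y z w : ℂ) (hx : c * x + d ≠ 0) (hy : c * y + d ≠ 0)
    (hz : c * z + d ≠ 0) (hw : c * w + d ≠ 0) :
    harmonicForm ((a * x + b) / (c * x + d)) ((a * y + b) / (c * y + d))
        ((a * z + b) / (c * z + d)) ((a * w + b) / (c * w + d)) =
      (a * d - b * c) ^ 2 * harmonicForm x y z w /
        ((c * x + d) * (c * y + d) * (c * z + d) * (c * w + d)) := by
  have clear_denoms : ∀ x' y' z' w' p q r s : ℂ, harmonicForm x' y' z' w' * (p * q * r * s) =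
      2 * ((x' * p) * (y' * q) * r * s + p * q * (z' * r) * (w' * s))
        - ((x' * p) * q + p * (y' * q)) * ((z' * r) * s + r * (w' * s)) := by
    intros; unfold harmonicForm; ring
  rw [eq_div_iff (mul_ne_zero (mul_ne_zero (mul_ne_zero hx hy) hz) hw), clear_denoms,
    div_mul_cancel₀ _ hx, div_mul_cancel₀ _ hy, div_mul_cancel₀ _ hz, div_mul_cancel₀ _ hw,
    harmonicForm]
  ring

/-- The map `g_v` of the paper: the harmonic conjugate of `v` with respect to `z` and `w`. -/
def harmonicConj (v z w : ℂ) : ℂ := (v * (z / 2 + w / 2) - z * w) / (v - (z / 2 + w / 2))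

theorem eq_harmonicConj_iff {u v z w : ℂ} (h : v - (z / 2 + w / 2) ≠ 0) :
    u = harmonicConj v z w ↔ harmonicForm u v z w = 0 := by
  have hform : harmonicForm u v z w =
      2 * (u * (v - (z / 2 + w / 2)) - (v * (z / 2 + w / 2) - z * w)) := by
    unfold harmonicForm; ring
  rw [harmonicConj, eq_div_iff h, hform, mul_eq_zero, sub_eq_zero]
  simp

theorem normSq_sub_midpoint_sub_normSq_s13 (v x y : ℂ) :
    normSq (v - (x / 2 + y / 2)) - normSq (v * (x / 2 + y / 2) - x * y) =
      ((1 - normSq x) * normSq (v - y) + (1 - normSq y) * normSq (v - x)) / 2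
        + normSq (x - y) * (normSq v - 1) / 4 := by
  simp only [normSq_apply, sub_re, sub_im, add_re, add_im, mul_re, mul_im, div_re, div_im,
    re_ofNat, im_ofNat]
  ring

theorem normSq_lt_normSq_sub_midpoint {v x y : ℂ} (hv : ‖v‖ = 1) (hx : ‖x‖ < 1) (hy : ‖y‖ < 1) :
    normSq (v * (x / 2 + y / 2) - x * y) < normSq (v - (x / 2 + y / 2)) := by
  have hvy : 0 < normSq (v - y) := normSq_pos.2 (sub_ne_zero.2 (by rintro rfl; linarith))
  have hvx : 0 ≤ normSq (v - x) := normSq_nonneg _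
  have hx' := normSq_lt_one_of_norm_lt_one hx
  have hy' := normSq_lt_one_of_norm_lt_one hy
  have hv' : normSq v = 1 := by rw [normSq_eq_norm_sq, hv, one_pow]
  have key := normSq_sub_midpoint_sub_normSq_s13 v x y
  rw [hv', sub_self, mul_zero, zero_div, add_zero] at key
  nlinarith [mul_pos (sub_pos.2 hx') hvy, mul_nonneg (sub_pos.2 hy').le hvx]

theorem sub_midpoint_ne_zero {v x y : ℂ} (hv : ‖v‖ = 1) (hx : ‖x‖ < 1) (hy : ‖y‖ < 1) :
    v - (x / 2 + y / 2) ≠ 0 :=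
  normSq_pos.1 ((normSq_nonneg _).trans_lt (normSq_lt_normSq_sub_midpoint hv hx hy))

theorem norm_harmonicConj_lt_one {v x y : ℂ} (hv : ‖v‖ = 1) (hx : ‖x‖ < 1) (hy : ‖y‖ < 1) :
    ‖harmonicConj v x y‖ < 1 :=
  norm_div_lt_one_of_normSq_lt (normSq_lt_normSq_sub_midpoint hv hx hy)

def diskAut (μ a z : ℂ) : ℂ := μ * (z - a) / (1 - conj a * z)

def diskAutInv (μ a w : ℂ) : ℂ := (w / μ + a) / (1 + conj a * (w / μ))

theorem diskAut_diskAutInv {μ a w : ℂ} (hμ : ‖μ‖ = 1) (ha : ‖a‖ < 1) (hw : ‖w‖ ≤ 1) :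
    diskAut μ a (diskAutInv μ a w) = w := by
  have hμ0 : μ ≠ 0 := norm_ne_zero_iff.1 (by rw [hμ]; exact one_ne_zero)
  have hD := one_add_conj_mul_ne_zero ha (x := w / μ) (by rwa [norm_div, hμ, div_one])
  have haa := one_sub_conj_mul_ne_zero ha ha.le
  have hX : diskAutInv μ a w * (1 + conj a * (w / μ)) = w / μ + a := div_mul_cancel₀ _ hD
  have hnum : diskAutInv μ a w - a = w / μ * (1 - conj a * a) / (1 + conj a * (w / μ)) := by
    rw [eq_div_iff hD]; linear_combination hX
  have hden : 1 - conj a * diskAutInv μ a w = (1 - conj a * a) / (1 + conj a * (w / μ)) := by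
    rw [eq_div_iff hD]; linear_combination (-conj a) * hX
  rw [diskAut, hnum, hden, mul_div_assoc, div_div_div_cancel_right₀ hD,
    mul_div_cancel_right₀ _ haa, mul_div_cancel₀ _ hμ0]

theorem normSq_one_add_conj_mul_sub_normSq_add (a u : ℂ) :
    normSq (1 + conj a * u) - normSq (u + a) = (1 - normSq a) * (1 - normSq u) := by
  simp only [normSq_apply, add_re, add_im, mul_re, mul_im, one_re, one_im, conj_re, conj_im]
  ring

theorem norm_diskAutInv_lt_one {μ a w : ℂ} (hμ : ‖μ‖ = 1) (ha : ‖a‖ < 1) (hw : ‖w‖ < 1) :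
    ‖diskAutInv μ a w‖ < 1 := by
  have hu := normSq_lt_one_of_norm_lt_one (x := w / μ) (by rwa [norm_div, hμ, div_one])
  have ha' := normSq_lt_one_of_norm_lt_one ha
  have key := normSq_one_add_conj_mul_sub_normSq_add a (w / μ)
  exact norm_div_lt_one_of_normSq_lt (by nlinarith [mul_pos (sub_pos.2 ha') (sub_pos.2 hu)])

theorem norm_sub_eq_norm_one_sub_conj_mul {a v : ℂ} (hv : ‖v‖ = 1) :
    ‖v - a‖ = ‖1 - conj a * v‖ := by
  have h : 1 - conj a * v = v * conj (v - a) := by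
    rw [map_sub, mul_sub, mul_conj', hv]; push_cast; ring
  rw [h, norm_mul, hv, one_mul, norm_conj]

theorem norm_diskAut_eq_one {μ a v : ℂ} (hμ : ‖μ‖ = 1) (ha : ‖a‖ < 1) (hv : ‖v‖ = 1) :
    ‖diskAut μ a v‖ = 1 := by
  rw [diskAut, norm_div, norm_mul, hμ, one_mul, norm_sub_eq_norm_one_sub_conj_mul hv,
    div_self (norm_ne_zero_iff.2 (one_sub_conj_mul_ne_zero ha hv.le))]

theorem harmonicForm_diskAut_eq_zero {μ a x y z w : ℂ} (ha : ‖a‖ < 1) (hx : ‖x‖ ≤ 1)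
    (hy : ‖y‖ ≤ 1) (hz : ‖z‖ ≤ 1) (hw : ‖w‖ ≤ 1) (h : harmonicForm x y z w = 0) :
    harmonicForm (diskAut μ a x) (diskAut μ a y) (diskAut μ a z) (diskAut μ a w) = 0 := by
  have hmob : ∀ t, diskAut μ a t = (μ * t + -(μ * a)) / (-conj a * t + 1) := fun t => by
    rw [diskAut]; ring
  have hden : ∀ {t : ℂ}, ‖t‖ ≤ 1 → -conj a * t + 1 ≠ 0 := fun ht => by
    rw [neg_mul, neg_add_eq_sub]; exact one_sub_conj_mul_ne_zero ha ht
  rw [hmob, hmob, hmob, hmob, harmonicForm_mobius _ _ _ _ _ _ _ _ (hden hx) (hden hy) (hden hz)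
    (hden hw), h, mul_zero, zero_div]

end

/-- For every Möbius automorphism `γ(z) = μ(z−a)/(1−conj(a)z)` of the disk
(`‖a‖ < 1`, `‖μ‖ = 1`, with inverse `γ⁻¹(w) = (w/μ + a)/(1 + conj(a)·(w/μ))`) and every
`ν ∈ ∂𝔻`, the conjugated map `(γ · g_ν)(z,w) = γ(g_ν(γ⁻¹z, γ⁻¹w))` equals `g_{γ(ν)}`,
where `γ(ν)` is the boundary extension of `γ` applied to `ν`. -/
theorem automorphism_equivariance_of_extremals
    (a μ : ℂ) (ha : ‖a‖ < 1) (hμ : ‖μ‖ = 1)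
    (γ γinv : ℂ → ℂ)
    (hγ : ∀ z : ℂ, γ z = μ * (z - a) / (1 - (starRingEnd ℂ) a * z))
    (hγinv : ∀ w : ℂ, γinv w = (w / μ + a) / (1 + (starRingEnd ℂ) a * (w / μ)))
    (g : ℂ → ℂ → ℂ → ℂ)
    (hg : ∀ ν z w : ℂ,
      g ν z w = (ν * (z / 2 + w / 2) - z * w) / (ν - (z / 2 + w / 2)))
    (ν : ℂ) (hν : ‖ν‖ = 1) :
    ∀ z w : ℂ, ‖z‖ < 1 → ‖w‖ < 1 →
      γ (g ν (γinv z) (γinv w)) = g (γ ν) z w := by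
  obtain rfl : γ = diskAut μ a := funext hγ
  obtain rfl : γinv = diskAutInv μ a := funext hγinv
  obtain rfl : g = harmonicConj := funext fun ν => funext fun z => funext (hg ν z)
  intro z w hz hw
  have hz' := norm_diskAutInv_lt_one hμ ha hz
  have hw' := norm_diskAutInv_lt_one hμ ha hw
  have hH := (eq_harmonicConj_iff (sub_midpoint_ne_zero hν hz' hw')).1 rfl
  have hγH := harmonicForm_diskAut_eq_zero (μ := μ) ha (norm_harmonicConj_lt_one hν hz' hw').le
    hν.le hz'.le hw'.le hH
  rw [diskAut_diskAutInv hμ ha hz.le, diskAut_diskAutInv hμ ha hw.le] at hγH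
  exact (eq_harmonicConj_iff (sub_midpoint_ne_zero (norm_diskAut_eq_one hμ ha hν) hz hw)).2 hγH
end
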